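/- arXiv:1606.01806 — 7 statements merged into one kernel-verified Lean document; each statement's English description precedes it below -/
import Mathlib

section
/- Let k be a positive integer and let X be a nonnegative random variable with E X = 1 satisfying ‖X‖_{2p} ≤ 2^k ‖X‖_p for all p ≥ 1. Then with C = 8^{k+1}, for all x ≥ 1 and t ≥ 1 one has N(C t x) ≥ t^{1/k} N(x); equivalently, P(X ≥ C t x) ≤ P(X ≥ x)^{t^{1/k}}. -/
open MeasureTheory ProbabilityTheory
open scoped ENNReal

/-- `N(t) = -ln P(X ≥ t)`, valued in `EReal` so that `-ln 0 = ⊤`. -/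
noncomputable def tailFun {Ω : Type*} [MeasurableSpace Ω] (μ : Measure Ω) (X : Ω → ℝ)
    (t : ℝ) : EReal :=
  - ENNReal.log (μ {ω | t ≤ X ω})

/-- Lemma 3.1: with `C = 8^(k+1)`, `N(Ctx) >= t^(1/k) * N(x)` for `x, t >= 1`;
equivalently `P(X >= Ctx) <= P(X >= x)^(t^(1/k))`. -/
theorem stmt_6 (k : ℕ) (hk : 0 < k) {Ω : Type*} [MeasurableSpace Ω] (μ : Measure Ω)
    [IsProbabilityMeasure μ] (X : Ω → ℝ) (hXm : Measurable X) (hXnn : ∀ ω, 0 ≤ X ω)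
    (hmean : (∫ ω, X ω ∂μ) = 1)
    (hMC : ∀ q : ℝ, 1 ≤ q →
      eLpNorm X (ENNReal.ofReal (2 * q)) μ ≤ 2 ^ k * eLpNorm X (ENNReal.ofReal q) μ) :
    ∀ x : ℝ, 1 ≤ x → ∀ t : ℝ, 1 ≤ t →
      ((t ^ (1 / (k : ℝ)) : ℝ) : EReal) * tailFun μ X x
          ≤ tailFun μ X ((8 : ℝ) ^ (k + 1) * t * x) ∧
        μ {ω | (8 : ℝ) ^ (k + 1) * t * x ≤ X ω}
          ≤ μ {ω | x ≤ X ω} ^ (t ^ (1 / (k : ℝ))) := by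
  have hInt : Integrable X μ := by
    by_contra h
    rw [integral_undef h] at hmean; exact one_ne_zero hmean.symm
  set f : Ω → ℝ≥0∞ := fun ω => ENNReal.ofReal (X ω) with hfdef
  have hfm : Measurable f := hXm.ennreal_ofReal
  set I : ℝ → ℝ≥0∞ := fun q => ∫⁻ ω, f ω ^ q ∂μ with hIdef
  have help : ∀ q : ℝ, 0 < q → eLpNorm X (ENNReal.ofReal q) μ = (I q) ^ (1/q) := by
    intro q hq
    rw [eLpNorm_eq_lintegral_rpow_enorm_toReal (by simp [ENNReal.ofReal_eq_zero]; linarith)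
        ENNReal.ofReal_ne_top, ENNReal.toReal_ofReal hq.le]
    congr 1
    apply lintegral_congr
    intro ω
    rw [Real.enorm_eq_ofReal (hXnn ω)]
  have hI1 : I 1 = 1 := by
    simp only [hIdef, ENNReal.rpow_one]
    rw [← ofReal_integral_eq_lintegral_ofReal hInt (Filter.Eventually.of_forall hXnn), hmean,
      ENNReal.ofReal_one]
  have hM1 : eLpNorm X (ENNReal.ofReal 1) μ = 1 := by
    rw [help 1 one_pos, hI1, ENNReal.one_rpow]
  have hmono : ∀ q r : ℝ, q ≤ r →
      eLpNorm X (ENNReal.ofReal q) μ ≤ eLpNorm X (ENNReal.ofReal r) μ :=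
    fun q r hqr => eLpNorm_le_eLpNorm_of_exponent_le (ENNReal.ofReal_le_ofReal hqr)
      hXm.aestronglyMeasurable
  -- doubling iterate
  have hiter : ∀ m : ℕ, ∀ q : ℝ, 1 ≤ q →
      eLpNorm X (ENNReal.ofReal (2 ^ m * q)) μ ≤ 2 ^ (k * m) * eLpNorm X (ENNReal.ofReal q) μ := by
    intro m
    induction m with
    | zero => intro q hq; simp
    | succ m ih =>
      intro q hq
      have h1 : (1:ℝ) ≤ 2 ^ m * q := by
        have : (1:ℝ) ≤ 2 ^ m := one_le_pow₀ (by norm_num)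
        nlinarith
      have h2 : (2:ℝ) ^ (m+1) * q = 2 * (2 ^ m * q) := by ring
      rw [h2]
      calc eLpNorm X (ENNReal.ofReal (2 * (2 ^ m * q))) μ
          ≤ 2 ^ k * eLpNorm X (ENNReal.ofReal (2 ^ m * q)) μ := hMC _ h1
        _ ≤ 2 ^ k * (2 ^ (k * m) * eLpNorm X (ENNReal.ofReal q) μ) := by
            exact mul_le_mul_right (ih q hq) _
        _ = 2 ^ (k * (m+1)) * eLpNorm X (ENNReal.ofReal q) μ := by
            rw [← mul_assoc, ← pow_add]; ring_nf
  -- growth lemma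
  have hgrow : ∀ q : ℝ, 1 ≤ q → ∀ u : ℝ, 1 ≤ u →
      eLpNorm X (ENNReal.ofReal (u * q)) μ
        ≤ ENNReal.ofReal ((2 * u) ^ k) * eLpNorm X (ENNReal.ofReal q) μ := by
    intro q hq u hu
    set m : ℕ := ⌈Real.logb 2 u⌉₊ with hm
    have hu0 : (0:ℝ) < u := by linarith
    have hlogb0 : 0 ≤ Real.logb 2 u := Real.logb_nonneg one_lt_two hu
    have hum : u ≤ 2 ^ m := by
      have h1 : Real.logb 2 u ≤ (m : ℝ) := Nat.le_ceil _
      have := Real.rpow_le_rpow_of_exponent_le (one_le_two) h1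
      rw [Real.rpow_logb two_pos (by norm_num) hu0, Real.rpow_natCast] at this
      exact this
    have hm2u : (2:ℝ) ^ m ≤ 2 * u := by
      have h1 : (m : ℝ) ≤ Real.logb 2 u + 1 := le_of_lt (Nat.ceil_lt_add_one hlogb0)
      have := Real.rpow_le_rpow_of_exponent_le (one_le_two) h1
      rw [Real.rpow_natCast, Real.rpow_add two_pos, Real.rpow_logb two_pos (by norm_num) hu0,
        Real.rpow_one] at this
      linarith
    calc eLpNorm X (ENNReal.ofReal (u * q)) μ
        ≤ eLpNorm X (ENNReal.ofReal (2 ^ m * q)) μ := by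
          apply hmono
          have : (0:ℝ) < q := by linarith
          nlinarith
      _ ≤ 2 ^ (k * m) * eLpNorm X (ENNReal.ofReal q) μ := hiter m q hq
      _ ≤ ENNReal.ofReal ((2 * u) ^ k) * eLpNorm X (ENNReal.ofReal q) μ := by
          apply mul_le_mul_left
          have h1 : ((2:ℝ≥0∞)) ^ (k*m) = ENNReal.ofReal ((2:ℝ) ^ (k*m)) := by
            rw [ENNReal.ofReal_pow (by norm_num)]
            norm_num
          rw [h1]
          apply ENNReal.ofReal_le_ofReal
          calc (2:ℝ) ^ (k*m) = ((2:ℝ) ^ m) ^ k := by rw [← pow_mul, mul_comm]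
            _ ≤ (2*u) ^ k := pow_le_pow_left₀ (by positivity) hm2u k
  have hMle : ∀ u : ℝ, 1 ≤ u →
      eLpNorm X (ENNReal.ofReal u) μ ≤ ENNReal.ofReal ((2 * u) ^ k) := by
    intro u hu
    have := hgrow 1 le_rfl u hu
    rwa [mul_one, hM1, mul_one] at this
  -- Markov
  have hmarkov : ∀ r : ℝ, 1 ≤ r → ∀ s : ℝ, 0 < s →
      μ {ω | s ≤ X ω} ≤ (eLpNorm X (ENNReal.ofReal r) μ / ENNReal.ofReal s) ^ r := by
    intro r hr s hs
    have hr0 : (0:ℝ) < r := by linarith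
    have hsub : {ω | s ≤ X ω} ⊆ {ω | ENNReal.ofReal s ^ r ≤ f ω ^ r} := by
      intro ω hω
      exact ENNReal.rpow_le_rpow (ENNReal.ofReal_le_ofReal hω) hr0.le
    have hkey : ENNReal.ofReal s ^ r * μ {ω | s ≤ X ω} ≤ I r := by
      calc ENNReal.ofReal s ^ r * μ {ω | s ≤ X ω}
          ≤ ENNReal.ofReal s ^ r * μ {ω | ENNReal.ofReal s ^ r ≤ f ω ^ r} :=
            mul_le_mul_right (measure_mono hsub) _
        _ ≤ ∫⁻ ω, f ω ^ r ∂μ :=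
            mul_meas_ge_le_lintegral₀ (hfm.aemeasurable.pow_const r) _
    have hs0 : ENNReal.ofReal s ^ r ≠ 0 := by
      apply ne_of_gt
      apply ENNReal.rpow_pos (by simpa using hs) ENNReal.ofReal_ne_top
    have hstop : ENNReal.ofReal s ^ r ≠ ∞ :=
      ENNReal.rpow_ne_top_of_nonneg hr0.le ENNReal.ofReal_ne_top
    have h2 : μ {ω | s ≤ X ω} ≤ I r / ENNReal.ofReal s ^ r := by
      rw [ENNReal.le_div_iff_mul_le (Or.inl hs0) (Or.inl hstop), mul_comm]
      exact hkey
    have h3 : (eLpNorm X (ENNReal.ofReal r) μ / ENNReal.ofReal s) ^ r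
        = I r / ENNReal.ofReal s ^ r := by
      rw [ENNReal.div_rpow_of_nonneg _ _ hr0.le, help r hr0, ← ENNReal.rpow_mul,
        one_div, inv_mul_cancel₀ hr0.ne', ENNReal.rpow_one]
    rw [h3]; exact h2
  intro x hx t ht
  set u : ℝ := t ^ (1 / (k:ℝ)) with hudef
  have hk0 : (0:ℝ) < k := Nat.cast_pos.mpr hk
  have ht0 : (0:ℝ) < t := by linarith
  have hu1 : 1 ≤ u := Real.one_le_rpow ht (by positivity)
  have hu0 : (0:ℝ) < u := by linarith
  have huk : u ^ k = t := by
    rw [hudef, ← Real.rpow_natCast (t ^ (1/(k:ℝ))) k, ← Real.rpow_mul ht0.le,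
      one_div, inv_mul_cancel₀ (ne_of_gt hk0), Real.rpow_one]
  set C : ℝ := (8:ℝ) ^ (k+1) with hCdef
  have hC1 : (1:ℝ) ≤ C := one_le_pow₀ (by norm_num)
  have hx0 : (0:ℝ) < x := by linarith
  have hCtx0 : (0:ℝ) < C * t * x := by positivity
  set p₀ : ℝ≥0∞ := μ {ω | x ≤ X ω} with hp₀
  set p₁ : ℝ≥0∞ := μ {ω | C * t * x ≤ X ω} with hp₁
  have hp₀top : p₀ ≠ ∞ := measure_ne_top μ _
  set c : ℝ := (1/4 : ℝ) ^ (k+1) with hcdef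
  have hc0 : (0:ℝ) < c := by positivity
  have main : p₁ ≤ p₀ ^ u := by
    rcases le_or_gt (ENNReal.ofReal c) p₀ with hB | hC4
    · -- Case B : p₀ not too small
      calc p₁ ≤ (eLpNorm X (ENNReal.ofReal u) μ / ENNReal.ofReal (C*t*x)) ^ u := by
            rw [hp₁]; exact hmarkov u hu1 _ hCtx0
        _ ≤ (ENNReal.ofReal ((2*u)^k) / ENNReal.ofReal (C*t*x)) ^ u := by
            gcongr
            exact hMle u hu1
        _ = (ENNReal.ofReal ((2*u)^k / (C*t*x))) ^ u := by
            rw [ENNReal.ofReal_div_of_pos hCtx0]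
        _ ≤ (ENNReal.ofReal c) ^ u := by
            apply ENNReal.rpow_le_rpow _ hu0.le
            apply ENNReal.ofReal_le_ofReal
            rw [div_le_iff₀ hCtx0]
            have h48 : ((1:ℝ)/4)^(k+1) * (8:ℝ)^(k+1) = 2^(k+1) := by
              rw [← mul_pow]; norm_num
            have h2k : (0:ℝ) < 2^k := by positivity
            have hps : (2:ℝ)^(k+1) = 2*2^k := by ring
            calc (2*u:ℝ)^k = 2^k * t := by rw [mul_pow, huk]
              _ ≤ (2^(k+1) * t) * x := by
                  rw [hps]
                  have h5 : (2:ℝ)^k * t ≤ 2^k*t*x := le_mul_of_one_le_right (by positivity) hx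
                  have h6 : (0:ℝ) < 2^k*t*x := by positivity
                  linarith
              _ = c * (C * t * x) := by rw [hcdef, hCdef, ← h48]; ring
        _ ≤ p₀ ^ u := ENNReal.rpow_le_rpow hB hu0.le
    · rcases eq_or_lt_of_le (zero_le : (0:ℝ≥0∞) ≤ p₀) with hzero | hpos
      · -- p₀ = 0
        have hsub : {ω | C*t*x ≤ X ω} ⊆ {ω | x ≤ X ω} := by
          intro ω hω
          simp only [Set.mem_setOf_eq] at *
          have h1 : (1:ℝ) ≤ C * t := by nlinarith
          have h2 : x ≤ C * t * x := le_mul_of_one_le_left hx0.le h1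
          linarith
        have hz : p₁ = 0 := by
          rw [hp₁]
          refine le_antisymm (le_trans (measure_mono hsub) ?_) zero_le
          rw [← hp₀, ← hzero]
        rw [hz, ← hzero, ENNReal.zero_rpow_of_pos hu0]
      · -- Case C : 0 < p₀ < ofReal c
        set pr : ℝ := p₀.toReal with hprdef
        have hpr0 : 0 < pr := ENNReal.toReal_pos hpos.ne' hp₀top
        have hp₀r : p₀ = ENNReal.ofReal pr := (ENNReal.ofReal_toReal hp₀top).symm
        have hprc : pr ≤ c := by
          rw [hp₀r] at hC4
          exact le_of_lt ((ENNReal.ofReal_lt_ofReal_iff hc0).mp hC4)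
        set L : ℝ := Real.log 4 with hLdef
        have hL0 : 0 < L := Real.log_pos (by norm_num)
        have hL2 : L = 2 * Real.log 2 := by
          rw [hLdef, show (4:ℝ) = 2^2 by norm_num, Real.log_pow]; push_cast; ring
        set u₀ : ℝ := - Real.log pr with hu₀def
        have hlogc : Real.log c = -(((k:ℝ)+1) * L) := by
          rw [hcdef, Real.log_pow, one_div, Real.log_inv]; push_cast; ring
        have hu₀ : ((k:ℝ)+1) * L ≤ u₀ := by
          have h := Real.log_le_log hpr0 hprc
          rw [hlogc] at h
          rw [hu₀def]; linarith
        set q : ℝ := (u₀ - L) / ((k:ℝ) * L) with hqdef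
        have hkL0 : (0:ℝ) < (k:ℝ) * L := by positivity
        have hq1 : 1 ≤ q := by
          rw [hqdef, le_div_iff₀ hkL0]
          nlinarith
        have hq0 : (0:ℝ) < q := by linarith
        have hqL : (k:ℝ) * q * L = u₀ - L := by
          rw [hqdef]
          field_simp
        have hhalf : (2:ℝ) ^ ((k:ℝ) * q) * pr ^ ((1:ℝ)/2) = 1/2 := by
          rw [Real.rpow_def_of_pos two_pos, Real.rpow_def_of_pos hpr0, ← Real.exp_add]
          have h1 : (k:ℝ) * q * (2 * Real.log 2) = u₀ - 2 * Real.log 2 := by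
            rw [← hL2]; exact hqL
          have h2 : Real.log pr = -u₀ := by rw [hu₀def]; ring
          have h3 : Real.log 2 * ((k:ℝ)*q) + Real.log pr * (1/2) = - Real.log 2 := by
            linear_combination h1 / 2 + h2 / 2
          rw [h3, Real.exp_neg, Real.exp_log two_pos]
          norm_num
        -- finiteness of I q
        have hfin : I q ≠ ∞ := by
          have h1 : eLpNorm X (ENNReal.ofReal q) μ ≤ ENNReal.ofReal ((2*q)^k) := hMle q hq1
          rw [help q hq0] at h1
          have h2 : I q = (I q ^ (1/q)) ^ q := by
            rw [← ENNReal.rpow_mul, one_div, inv_mul_cancel₀ hq0.ne', ENNReal.rpow_one]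
          rw [h2]
          exact ne_of_lt (lt_of_le_of_lt (ENNReal.rpow_le_rpow h1 hq0.le)
            (ENNReal.rpow_lt_top_of_nonneg hq0.le ENNReal.ofReal_ne_top))
        -- truncation bound
        have htrunc : I q ≤ ENNReal.ofReal x ^ (q:ℝ) + (I (2*q)) ^ ((1:ℝ)/2) * p₀ ^ ((1:ℝ)/2) := by
          have hA : MeasurableSet {ω | x ≤ X ω} := hXm measurableSet_Ici
          have hsplit : I q = (∫⁻ ω in {ω | x ≤ X ω}, f ω ^ (q:ℝ) ∂μ)
              + ∫⁻ ω in {ω | x ≤ X ω}ᶜ, f ω ^ (q:ℝ) ∂μ := (lintegral_add_compl _ hA).symm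
          have hcompl : ∫⁻ ω in {ω | x ≤ X ω}ᶜ, f ω ^ (q:ℝ) ∂μ ≤ ENNReal.ofReal x ^ (q:ℝ) := by
            calc ∫⁻ ω in {ω | x ≤ X ω}ᶜ, f ω ^ (q:ℝ) ∂μ
                ≤ ∫⁻ _ω in {ω | x ≤ X ω}ᶜ, ENNReal.ofReal x ^ (q:ℝ) ∂μ := by
                  apply setLIntegral_mono' hA.compl
                  intro ω hω
                  simp only [Set.mem_compl_iff, Set.mem_setOf_eq, not_le] at hω
                  exact ENNReal.rpow_le_rpow (ENNReal.ofReal_le_ofReal hω.le) hq0.le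
              _ = ENNReal.ofReal x ^ (q:ℝ) * μ {ω | x ≤ X ω}ᶜ := setLIntegral_const _ _
              _ ≤ ENNReal.ofReal x ^ (q:ℝ) * 1 := mul_le_mul_right prob_le_one _
              _ = ENNReal.ofReal x ^ (q:ℝ) := mul_one _
          have h22 : (2:ℝ).HolderConjugate 2 := Real.HolderConjugate.two_two
          have hCS := ENNReal.lintegral_mul_le_Lp_mul_Lq μ h22
            (hfm.aemeasurable.pow_const q)
            ((measurable_const.indicator hA).aemeasurable :
              AEMeasurable ({ω | x ≤ X ω}.indicator (fun _ => (1:ℝ≥0∞))) μ)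
          have hLHS : ∫⁻ ω, ((fun ω => f ω ^ (q:ℝ)) * {ω | x ≤ X ω}.indicator (fun _ => (1:ℝ≥0∞))) ω ∂μ
              = ∫⁻ ω in {ω | x ≤ X ω}, f ω ^ (q:ℝ) ∂μ := by
            rw [← lintegral_indicator hA]
            apply lintegral_congr
            intro ω
            by_cases h : ω ∈ {ω | x ≤ X ω} <;> simp [Set.indicator, h]
          have hR1 : ∫⁻ ω, ((fun ω => f ω ^ (q:ℝ)) ω) ^ (2:ℝ) ∂μ = I (2*q) := by
            apply lintegral_congr
            intro ω
            simp only
            rw [← ENNReal.rpow_mul]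
            congr 1
            ring
          have hR2 : ∫⁻ ω, ({ω | x ≤ X ω}.indicator (fun _ => (1:ℝ≥0∞)) ω) ^ (2:ℝ) ∂μ = p₀ := by
            rw [hp₀]
            have heq : ∀ ω, ({ω | x ≤ X ω}.indicator (fun _ => (1:ℝ≥0∞)) ω) ^ (2:ℝ)
                = {ω | x ≤ X ω}.indicator (fun _ => (1:ℝ≥0∞)) ω := by
              intro ω
              by_cases h : ω ∈ {ω | x ≤ X ω} <;>
                simp [Set.indicator, h, ENNReal.zero_rpow_of_pos]
            rw [lintegral_congr heq, lintegral_indicator_const hA, one_mul]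
          rw [hLHS, hR1, hR2] at hCS
          rw [hsplit, add_comm]
          exact add_le_add hcompl hCS
        have hI2q : (I (2*q)) ^ ((1:ℝ)/2) ≤ ((2:ℝ≥0∞) ^ k) ^ (q:ℝ) * I q := by
          have h1 := hMC q hq1
          rw [help (2*q) (by linarith), help q hq0] at h1
          calc I (2*q) ^ ((1:ℝ)/2) = (I (2*q) ^ (1/(2*q))) ^ (q:ℝ) := by
                rw [← ENNReal.rpow_mul]; congr 1; field_simp
            _ ≤ ((2:ℝ≥0∞)^k * I q ^ (1/q)) ^ (q:ℝ) := ENNReal.rpow_le_rpow h1 hq0.le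
            _ = ((2:ℝ≥0∞)^k) ^ (q:ℝ) * I q := by
                rw [ENNReal.mul_rpow_of_nonneg _ _ hq0.le, ← ENNReal.rpow_mul, one_div,
                  inv_mul_cancel₀ hq0.ne', ENNReal.rpow_one]
        have hcoef : ((2:ℝ≥0∞) ^ k) ^ (q:ℝ) * p₀ ^ ((1:ℝ)/2) = ENNReal.ofReal (1/2) := by
          have h1 : ((2:ℝ≥0∞) ^ k) ^ (q:ℝ) = ENNReal.ofReal ((2:ℝ) ^ ((k:ℝ)*q)) := by
            rw [← ENNReal.rpow_natCast (2:ℝ≥0∞) k, ← ENNReal.rpow_mul,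
              show (2:ℝ≥0∞) = ENNReal.ofReal 2 by norm_num,
              ENNReal.ofReal_rpow_of_pos two_pos]
          have h2 : p₀ ^ ((1:ℝ)/2) = ENNReal.ofReal (pr ^ ((1:ℝ)/2)) := by
            rw [hp₀r, ENNReal.ofReal_rpow_of_pos hpr0]
          rw [h1, h2, ← ENNReal.ofReal_mul (by positivity), hhalf]
        have hIq2 : I q ≤ 2 * (ENNReal.ofReal x) ^ (q:ℝ) := by
          have h1 : I q ≤ ENNReal.ofReal x ^ (q:ℝ) + I q / 2 := by
            calc I q ≤ ENNReal.ofReal x ^ (q:ℝ) + (I (2*q)) ^ ((1:ℝ)/2) * p₀ ^ ((1:ℝ)/2) := htrunc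
              _ ≤ ENNReal.ofReal x ^ (q:ℝ) + (((2:ℝ≥0∞)^k)^(q:ℝ) * I q) * p₀ ^ ((1:ℝ)/2) := by
                  exact add_le_add_right (mul_le_mul_left hI2q _) _
              _ = ENNReal.ofReal x ^ (q:ℝ) + I q * (((2:ℝ≥0∞)^k)^(q:ℝ) * p₀ ^ ((1:ℝ)/2)) := by
                  ring_nf
              _ = ENNReal.ofReal x ^ (q:ℝ) + I q * ENNReal.ofReal (1/2) := by rw [hcoef]
              _ = ENNReal.ofReal x ^ (q:ℝ) + I q / 2 := by
                  congr 1
                  rw [ENNReal.ofReal_div_of_pos (by norm_num), ENNReal.ofReal_one,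
                    ENNReal.ofReal_ofNat, one_div, div_eq_mul_inv]
          have h2 : I q / 2 + I q / 2 ≤ ENNReal.ofReal x ^ (q:ℝ) + I q / 2 := by
            rw [ENNReal.add_halves]; exact h1
          have h3 : I q / 2 ≤ ENNReal.ofReal x ^ (q:ℝ) :=
            (ENNReal.add_le_add_iff_right (by
              exact ne_of_lt (ENNReal.div_lt_top hfin (by norm_num)))).mp h2
          calc I q = I q / 2 + I q / 2 := (ENNReal.add_halves _).symm
            _ ≤ ENNReal.ofReal x ^ (q:ℝ) + ENNReal.ofReal x ^ (q:ℝ) := add_le_add h3 h3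
            _ = 2 * (ENNReal.ofReal x) ^ (q:ℝ) := (two_mul _).symm
        have hMq : eLpNorm X (ENNReal.ofReal q) μ ≤ ENNReal.ofReal (2*x) := by
          rw [help q hq0]
          calc I q ^ (1/q) ≤ (2 * ENNReal.ofReal x ^ (q:ℝ)) ^ (1/q) :=
              ENNReal.rpow_le_rpow hIq2 (by positivity)
            _ = (2:ℝ≥0∞) ^ ((1:ℝ)/q) * ENNReal.ofReal x := by
                rw [ENNReal.mul_rpow_of_nonneg _ _ (by positivity), ← ENNReal.rpow_mul,
                  mul_one_div, div_self hq0.ne', ENNReal.rpow_one]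
            _ ≤ (2:ℝ≥0∞) ^ ((1:ℝ)) * ENNReal.ofReal x := by
                apply mul_le_mul_left
                apply ENNReal.rpow_le_rpow_of_exponent_le (by norm_num)
                rw [div_le_one hq0]; exact hq1
            _ = ENNReal.ofReal (2*x) := by
                rw [ENNReal.rpow_one, ENNReal.ofReal_mul (by norm_num), ENNReal.ofReal_ofNat]
        have hr1 : 1 ≤ u * q := by
          have := mul_le_mul hu1 hq1 zero_le_one (by linarith : (0:ℝ) ≤ u)
          simpa using this
        have hcq : ENNReal.ofReal c ^ (q:ℝ) ≤ p₀ := by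
          rw [ENNReal.ofReal_rpow_of_pos hc0, hp₀r]
          apply ENNReal.ofReal_le_ofReal
          rw [Real.rpow_def_of_pos hc0]
          have h1 : Real.log c * q = -(((k:ℝ)+1)*q*L) := by rw [hlogc]; ring
          rw [h1]
          have h2 : pr = Real.exp (-u₀) := by
            rw [hu₀def, neg_neg, Real.exp_log hpr0]
          rw [h2]
          apply Real.exp_le_exp.mpr
          have h3 : L ≤ q * L := le_mul_of_one_le_left hL0.le hq1
          have h4 : ((k:ℝ)+1)*q*L = (k:ℝ)*q*L + q*L := by ring
          linarith [hqL, h3, h4]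
        calc p₁ ≤ (eLpNorm X (ENNReal.ofReal (u*q)) μ / ENNReal.ofReal (C*t*x)) ^ (u*q) := by
              rw [hp₁]; exact hmarkov (u*q) hr1 _ hCtx0
          _ ≤ ((ENNReal.ofReal ((2*u)^k) * ENNReal.ofReal (2*x)) / ENNReal.ofReal (C*t*x)) ^ (u*q) := by
              gcongr
              exact (hgrow q hq1 u hu1).trans (mul_le_mul_right hMq _)
          _ = (ENNReal.ofReal ((2*u)^k * (2*x) / (C*t*x))) ^ (u*q) := by
              rw [← ENNReal.ofReal_mul (by positivity), ENNReal.ofReal_div_of_pos hCtx0]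
          _ = (ENNReal.ofReal c) ^ (u*q) := by
              congr 2
              have hk2 : (2*u:ℝ)^k = 2^k * t := by rw [mul_pow, huk]
              rw [hk2, div_eq_iff (ne_of_gt hCtx0), hcdef, hCdef]
              have h48 : ((1:ℝ)/4)^(k+1) * (8:ℝ)^(k+1) = 2^(k+1) := by
                rw [← mul_pow]; norm_num
              linear_combination (-(t*x)) * h48
          _ = ((ENNReal.ofReal c) ^ (q:ℝ)) ^ u := by
              rw [← ENNReal.rpow_mul, mul_comm]
          _ ≤ p₀ ^ u := ENNReal.rpow_le_rpow hcq hu0.le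
  refine ⟨?_, main⟩
  have hlog := ENNReal.log_monotone main
  rw [ENNReal.log_rpow] at hlog
  simp only [tailFun, ← hp₀, ← hp₁]
  rw [mul_neg]
  exact EReal.neg_le_neg_iff.mpr hlog
end

section
/- Let k be a positive integer and let X be a nonnegative random variable with E X = 1 satisfying ‖X‖_{2p} ≤ 2^k ‖X‖_p for all p ≥ 1. Then for every q ≥ 1, P( X ≥ ‖X‖_q / 2 ) ≥ (1/2^{k+1})^{2q}. -/
open MeasureTheory ProbabilityTheory
open scoped ENNReal

/-- Paley–Zygmund step: `P(X ≥ ‖X‖_q / 2) ≥ (2^{-(k+1)})^{2q}`. -/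
theorem stmt_7 (k : ℕ) (hk : 0 < k) {Ω : Type*} [MeasurableSpace Ω] (μ : Measure Ω)
    [IsProbabilityMeasure μ] (X : Ω → ℝ) (hXm : Measurable X) (hXnn : ∀ ω, 0 ≤ X ω)
    (hmean : (∫ ω, X ω ∂μ) = 1)
    (hMC : ∀ q : ℝ, 1 ≤ q →
      eLpNorm X (ENNReal.ofReal (2 * q)) μ ≤ 2 ^ k * eLpNorm X (ENNReal.ofReal q) μ) :
    ∀ q : ℝ, 1 ≤ q →
      ENNReal.ofReal ((1 / 2 ^ (k + 1) : ℝ) ^ (2 * q))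
        ≤ μ {ω | (eLpNorm X (ENNReal.ofReal q) μ).toReal / 2 ≤ X ω} := by
  intro q hq
  have hq0 : (0:ℝ) < q := lt_of_lt_of_le one_pos hq
  set f : Ω → ℝ≥0∞ := fun ω => ENNReal.ofReal (X ω) with hf
  have hfm : Measurable f := hXm.ennreal_ofReal
  have hnn : ∀ ω, ‖X ω‖ₑ = f ω := fun ω => Real.enorm_eq_ofReal (hXnn ω)
  have hint : Integrable X μ := by
    by_contra h
    rw [integral_undef h] at hmean; norm_num at hmean
  have hlint : ∫⁻ ω, f ω ∂μ = 1 := by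
    rw [← ofReal_integral_eq_lintegral_ofReal hint (Filter.Eventually.of_forall hXnn),
      hmean, ENNReal.ofReal_one]
  have h1 : eLpNorm X 1 μ = 1 := by
    rw [eLpNorm_one_eq_lintegral_enorm]; simp_rw [hnn]; exact hlint
  set me := eLpNorm X (ENNReal.ofReal q) μ with hme
  have hme1 : 1 ≤ me := by
    rw [← h1]
    exact eLpNorm_le_eLpNorm_of_exponent_le
      (by rw [← ENNReal.ofReal_one]; exact ENNReal.ofReal_le_ofReal hq)
      hXm.aestronglyMeasurable
  -- LHS rewritten as a power of 2
  have hLHS : ENNReal.ofReal ((1 / 2 ^ (k + 1) : ℝ) ^ (2 * q))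
      = (2:ℝ≥0∞) ^ (-(((k:ℝ)+1)) * (2*q)) := by
    have hb : (0:ℝ) < 1 / 2 ^ (k + 1) := by positivity
    rw [← ENNReal.ofReal_rpow_of_pos hb]
    have h2 : ENNReal.ofReal (1 / 2 ^ (k + 1) : ℝ) = (2:ℝ≥0∞) ^ (-(((k:ℝ)+1))) := by
      rw [one_div, ENNReal.ofReal_inv_of_pos (by positivity),
        ENNReal.ofReal_pow (by norm_num), ENNReal.ofReal_ofNat]
      rw [show ((k:ℝ)+1) = ((k+1 : ℕ) : ℝ) by push_cast; ring, ENNReal.rpow_neg,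
        ENNReal.rpow_natCast]
    rw [h2, ← ENNReal.rpow_mul]
  rcases eq_or_ne me ⊤ with htop | htop
  · -- infinite norm: the set is everything
    have hset : {ω | me.toReal / 2 ≤ X ω} = Set.univ := by
      ext ω
      simp only [Set.mem_setOf_eq, Set.mem_univ, iff_true, htop, ENNReal.toReal_top]
      simpa using hXnn ω
    rw [hset, measure_univ, hLHS]
    calc (2:ℝ≥0∞) ^ (-(((k:ℝ)+1)) * (2*q)) ≤ 2 ^ (0:ℝ) :=
          ENNReal.rpow_le_rpow_of_exponent_le one_le_two (by nlinarith)
      _ = 1 := ENNReal.rpow_zero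
  · have hme0 : (0:ℝ≥0∞) < me := lt_of_lt_of_le one_pos hme1
    set m : ℝ := me.toReal with hm
    set A : Set Ω := {ω | m / 2 ≤ X ω} with hA
    have hAmeas : MeasurableSet A := hXm measurableSet_Ici
    -- ∫⁻ f^q = me^q
    have hIq : ∫⁻ ω, f ω ^ q ∂μ = me ^ q := by
      rw [hme, eLpNorm_eq_lintegral_rpow_enorm_toReal (ENNReal.ofReal_pos.mpr hq0).ne'
        ENNReal.ofReal_ne_top, ENNReal.toReal_ofReal hq0.le]
      simp_rw [hnn]
      rw [one_div, ENNReal.rpow_inv_rpow hq0.ne']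
    -- ∫⁻ f^(2q) = m2^(2q)
    have hI2q : ∫⁻ ω, f ω ^ (2*q) ∂μ = (eLpNorm X (ENNReal.ofReal (2*q)) μ) ^ (2*q) := by
      rw [eLpNorm_eq_lintegral_rpow_enorm_toReal (ENNReal.ofReal_pos.mpr (by linarith)).ne'
        ENNReal.ofReal_ne_top, ENNReal.toReal_ofReal (by linarith)]
      simp_rw [hnn]
      rw [one_div, ENNReal.rpow_inv_rpow (by positivity)]
    -- Cauchy–Schwarz on A
    have hCS : ∫⁻ ω in A, f ω ^ q ∂μ
        ≤ (∫⁻ ω, f ω ^ (2*q) ∂μ) ^ (1/2 : ℝ) * (μ A) ^ (1/2 : ℝ) := by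
      set g : Ω → ℝ≥0∞ := A.indicator 1 with hg
      have hgm : Measurable g := (measurable_one).indicator hAmeas
      have h1e : ∫⁻ ω in A, f ω ^ q ∂μ = ∫⁻ ω, ((fun ω => f ω ^ q) * g) ω ∂μ := by
        rw [← lintegral_indicator hAmeas]
        congr 1; ext ω
        by_cases hω : ω ∈ A <;> simp [hg, hω]
      have h2e : ∀ ω, ((fun ω => f ω ^ q) ω) ^ (2:ℝ) = f ω ^ (2*q) := by
        intro ω; rw [← ENNReal.rpow_mul]; ring_nf
      have h3e : ∀ ω, g ω ^ (2:ℝ) = g ω := by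
        intro ω; by_cases hω : ω ∈ A <;> simp [hg, hω]
      calc ∫⁻ ω in A, f ω ^ q ∂μ = ∫⁻ ω, ((fun ω => f ω ^ q) * g) ω ∂μ := h1e
        _ ≤ (∫⁻ ω, ((fun ω => f ω ^ q) ω) ^ (2:ℝ) ∂μ) ^ (1/2:ℝ)
            * (∫⁻ ω, g ω ^ (2:ℝ) ∂μ) ^ (1/2:ℝ) :=
          ENNReal.lintegral_mul_le_Lp_mul_Lq μ (by constructor <;> norm_num)
            (hfm.pow_const q).aemeasurable hgm.aemeasurable
        _ = (∫⁻ ω, f ω ^ (2*q) ∂μ) ^ (1/2:ℝ) * (μ A) ^ (1/2:ℝ) := by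
          simp_rw [h2e, h3e]
          rw [hg, lintegral_indicator_one hAmeas]
    -- bound on the complement
    have hAc : ∫⁻ ω in Aᶜ, f ω ^ q ∂μ ≤ (me/2) ^ q := by
      have hbd : ∀ ω ∈ Aᶜ, f ω ^ q ≤ (me/2) ^ q := by
        intro ω hω
        apply ENNReal.rpow_le_rpow _ hq0.le
        have hωle : X ω ≤ m/2 := le_of_not_ge hω
        calc f ω ≤ ENNReal.ofReal (m/2) := ENNReal.ofReal_le_ofReal hωle
          _ = me/2 := by
            rw [ENNReal.ofReal_div_of_pos (by norm_num), hm,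
              ENNReal.ofReal_toReal htop, ENNReal.ofReal_ofNat]
      calc ∫⁻ ω in Aᶜ, f ω ^ q ∂μ ≤ ∫⁻ _ in Aᶜ, (me/2)^q ∂μ :=
            setLIntegral_mono measurable_const hbd
        _ = (me/2)^q * μ Aᶜ := setLIntegral_const _ _
        _ ≤ (me/2)^q * 1 := mul_le_mul_right prob_le_one _
        _ = (me/2)^q := mul_one _
    -- the 2q-norm bound
    have hI2 : (∫⁻ ω, f ω ^ (2*q) ∂μ) ^ (1/2:ℝ) ≤ ((2:ℝ≥0∞)^k * me) ^ q := by
      rw [hI2q, ← ENNReal.rpow_mul]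
      have : (2*q) * (1/2 : ℝ) = q := by ring
      rw [this]
      exact ENNReal.rpow_le_rpow (hMC q hq) hq0.le
    -- main inequality
    have key : me ^ q ≤ (me/2)^q + ((2:ℝ≥0∞)^k * me)^q * (μ A) ^ (1/2:ℝ) := by
      calc me ^ q = ∫⁻ ω, f ω ^ q ∂μ := hIq.symm
        _ = ∫⁻ ω in Aᶜ, f ω ^ q ∂μ + ∫⁻ ω in A, f ω ^ q ∂μ := by
          rw [add_comm, lintegral_add_compl _ hAmeas]
        _ ≤ (me/2)^q + ((2:ℝ≥0∞)^k * me)^q * (μ A) ^ (1/2:ℝ) :=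
          add_le_add hAc (hCS.trans (mul_le_mul_left hI2 _))
    -- cancel me^q
    have ha0 : me ^ q ≠ 0 := (ENNReal.rpow_pos hme0 htop).ne'
    have hat : me ^ q ≠ ⊤ := ENNReal.rpow_ne_top_of_nonneg hq0.le htop
    have key2 : (1:ℝ≥0∞) ≤ 2^(-q) + 2^((k:ℝ)*q) * (μ A)^(1/2:ℝ) := by
      rw [← ENNReal.mul_le_mul_iff_right ha0 hat, mul_one]
      calc me ^ q ≤ (me/2)^q + ((2:ℝ≥0∞)^k * me)^q * (μ A) ^ (1/2:ℝ) := key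
        _ = me^q * (2^(-q) + 2^((k:ℝ)*q) * (μ A)^(1/2:ℝ)) := by
          rw [ENNReal.div_rpow_of_nonneg _ _ hq0.le,
            ENNReal.mul_rpow_of_nonneg _ _ hq0.le,
            ← ENNReal.rpow_natCast (2:ℝ≥0∞) k, ← ENNReal.rpow_mul,
            ENNReal.rpow_neg, div_eq_mul_inv]
          ring
    have key3 : (2:ℝ≥0∞)^(-1:ℝ) ≤ 2^((k:ℝ)*q) * (μ A)^(1/2:ℝ) := by
      have h2q : (2:ℝ≥0∞)^(-q) ≤ 2^(-1:ℝ) :=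
        ENNReal.rpow_le_rpow_of_exponent_le one_le_two (by linarith)
      have := key2.trans (add_le_add_left h2q _)
      rwa [← tsub_le_iff_left, ENNReal.rpow_neg_one, ENNReal.one_sub_inv_two,
        ← ENNReal.rpow_neg_one] at this
    have key4 : (2:ℝ≥0∞)^(-1 - (k:ℝ)*q) ≤ (μ A)^(1/2:ℝ) := by
      have hmul := mul_le_mul_right key3 ((2:ℝ≥0∞)^(-((k:ℝ)*q)))
      rwa [← mul_assoc, ← ENNReal.rpow_add _ _ two_ne_zero ENNReal.ofNat_ne_top,
        ← ENNReal.rpow_add _ _ two_ne_zero ENNReal.ofNat_ne_top,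
        show -((k:ℝ)*q) + (k:ℝ)*q = 0 by ring, ENNReal.rpow_zero, one_mul,
        show -((k:ℝ)*q) + -1 = -1 - (k:ℝ)*q by ring] at hmul
    have key5 : (2:ℝ≥0∞)^((-1 - (k:ℝ)*q) * 2) ≤ μ A := by
      calc (2:ℝ≥0∞)^((-1 - (k:ℝ)*q) * 2) = ((2:ℝ≥0∞)^(-1 - (k:ℝ)*q)) ^ (2:ℝ) :=
            ENNReal.rpow_mul 2 _ 2
        _ ≤ ((μ A)^(1/2:ℝ)) ^ (2:ℝ) := ENNReal.rpow_le_rpow key4 (by norm_num)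
        _ = μ A := by rw [← ENNReal.rpow_mul]; norm_num
    rw [hLHS]
    refine le_trans ?_ key5
    exact ENNReal.rpow_le_rpow_of_exponent_le one_le_two (by nlinarith)
end

section
/- Let k be a positive integer and let X be a nonnegative random variable with E X = 1 satisfying ‖X‖_{2p} ≤ 2^k ‖X‖_p for all p ≥ 1. Set C = 8^{k+1}. Then for every q ≥ 1 and every t ≥ 1, P( X ≥ C t ‖X‖_q / 2 ) ≤ (1/4^{k+1})^{q t^{1/k}}. -/
open MeasureTheory ProbabilityTheory
open scoped ENNReal

/-- Chebyshev step: with `C = 8^{k+1}`, `P(X ≥ C t ‖X‖_q / 2) ≤ (4^{-(k+1)})^{q t^{1/k}}`. -/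
theorem stmt_8 (k : ℕ) (hk : 0 < k) {Ω : Type*} [MeasurableSpace Ω] (μ : Measure Ω)
    [IsProbabilityMeasure μ] (X : Ω → ℝ) (hXm : Measurable X) (hXnn : ∀ ω, 0 ≤ X ω)
    (hmean : (∫ ω, X ω ∂μ) = 1)
    (hMC : ∀ q : ℝ, 1 ≤ q →
      eLpNorm X (ENNReal.ofReal (2 * q)) μ ≤ 2 ^ k * eLpNorm X (ENNReal.ofReal q) μ) :
    ∀ q : ℝ, 1 ≤ q → ∀ t : ℝ, 1 ≤ t →
      μ {ω | (8 : ℝ) ^ (k + 1) * t * (eLpNorm X (ENNReal.ofReal q) μ).toReal / 2 ≤ X ω}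
        ≤ ENNReal.ofReal ((1 / 4 ^ (k + 1) : ℝ) ^ (q * t ^ (1 / (k : ℝ)))) := by
  intro q hq t ht
  have hXae : AEStronglyMeasurable X μ := hXm.aestronglyMeasurable
  have hXint : Integrable X μ := by
    by_contra h
    rw [integral_undef h] at hmean; norm_num at hmean
  have h1 : eLpNorm X 1 μ = 1 := by
    rw [eLpNorm_one_eq_lintegral_enorm]; simp only [enorm_eq_nnnorm]
    have hcoe : ∀ ω, (‖X ω‖₊ : ℝ≥0∞) = ENNReal.ofReal (X ω) := fun ω => by
      rw [← enorm_eq_nnnorm, ← ofReal_norm, Real.norm_of_nonneg (hXnn ω)]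
    simp_rw [hcoe]
    rw [← ofReal_integral_eq_lintegral_ofReal hXint (Filter.Eventually.of_forall hXnn), hmean,
      ENNReal.ofReal_one]
  -- iteration lemma
  have hiter : ∀ n : ℕ, ∀ r : ℝ, 1 ≤ r →
      eLpNorm X (ENNReal.ofReal (2 ^ n * r)) μ
        ≤ 2 ^ (k * n) * eLpNorm X (ENNReal.ofReal r) μ := by
    intro n
    induction n with
    | zero => intro r hr; simp
    | succ n ih =>
      intro r hr
      have hr' : (1 : ℝ) ≤ 2 ^ n * r := by nlinarith [one_le_pow₀ (one_le_two (α:=ℝ)) (n:=n)]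
      have h2 : (2 : ℝ) ^ (n + 1) * r = 2 * (2 ^ n * r) := by ring
      calc eLpNorm X (ENNReal.ofReal (2 ^ (n + 1) * r)) μ
          = eLpNorm X (ENNReal.ofReal (2 * (2 ^ n * r))) μ := by rw [h2]
        _ ≤ 2 ^ k * eLpNorm X (ENNReal.ofReal (2 ^ n * r)) μ := hMC _ hr'
        _ ≤ 2 ^ k * (2 ^ (k * n) * eLpNorm X (ENNReal.ofReal r) μ) := by
            gcongr; exact ih r hr
        _ = 2 ^ (k * (n + 1)) * eLpNorm X (ENNReal.ofReal r) μ := by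
            rw [← mul_assoc, ← pow_add]; ring_nf
  set A := eLpNorm X (ENNReal.ofReal q) μ with hA
  have hA1 : 1 ≤ A := by
    rw [← h1]
    exact eLpNorm_le_eLpNorm_of_exponent_le (by
      simpa using ENNReal.ofReal_le_ofReal hq) hXae
  have hAtop : A ≠ ∞ := by
    obtain ⟨n, hn⟩ := pow_unbounded_of_one_lt q (one_lt_two (α := ℝ))
    have : A ≤ 2 ^ (k * n) * eLpNorm X (ENNReal.ofReal 1) μ := by
      refine le_trans ?_ (hiter n 1 le_rfl)
      exact eLpNorm_le_eLpNorm_of_exponent_le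
        (ENNReal.ofReal_le_ofReal (by simpa using hn.le)) hXae
    simp only [ENNReal.ofReal_one, h1, mul_one] at this
    exact ne_top_of_le_ne_top (by simp) this
  have hA0 : A ≠ 0 := fun h => by simp [h] at hA1
  have hAr1 : (1:ℝ) ≤ A.toReal := by
    have := ENNReal.toReal_mono hAtop hA1
    simpa using this
  set s := t ^ (1 / (k:ℝ)) with hs
  have hkpos : (0:ℝ) < k := Nat.cast_pos.mpr hk
  have ht0 : (0:ℝ) < t := lt_of_lt_of_le one_pos ht
  have hs1 : 1 ≤ s := Real.one_le_rpow ht (by positivity)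
  have hsk : s ^ (k:ℕ) = t := by
    rw [hs, ← Real.rpow_natCast (t ^ (1/(k:ℝ))) k, ← Real.rpow_mul ht0.le,
      one_div_mul_cancel hkpos.ne', Real.rpow_one]
  set n := ⌈Real.logb 2 s⌉₊ with hn
  have hlogb0 : 0 ≤ Real.logb 2 s := Real.logb_nonneg one_lt_two hs1
  have hs_le : s ≤ 2 ^ n := by
    have h1 : (2:ℝ) ^ Real.logb 2 s ≤ 2 ^ (n:ℝ) :=
      Real.rpow_le_rpow_of_exponent_le one_le_two (Nat.le_ceil _)
    rw [Real.rpow_logb two_pos (by norm_num) (lt_of_lt_of_le one_pos hs1),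
      Real.rpow_natCast] at h1
    exact h1
  have h2n_le : (2:ℝ) ^ n ≤ 2 * s := by
    have h1 : (n:ℝ) ≤ Real.logb 2 s + 1 := (Nat.ceil_lt_add_one hlogb0).le
    have h2 : (2:ℝ) ^ (n:ℝ) ≤ 2 ^ (Real.logb 2 s + 1) :=
      Real.rpow_le_rpow_of_exponent_le one_le_two h1
    rw [Real.rpow_add two_pos, Real.rpow_logb two_pos (by norm_num)
      (lt_of_lt_of_le one_pos hs1), Real.rpow_one, Real.rpow_natCast] at h2
    linarith
  have h2n1 : (1:ℝ) ≤ 2 ^ n := one_le_pow₀ one_le_two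
  set p := (2:ℝ) ^ n * q with hp
  have hp1 : 1 ≤ p := by nlinarith
  have hpP : (ENNReal.ofReal p).toReal = p := ENNReal.toReal_ofReal (by linarith)
  have h8 : (0:ℝ) < 8 ^ (k+1) := by positivity
  set lam := (8:ℝ) ^ (k+1) * t * A.toReal / 2 with hlam
  have hlam_pos : 0 < lam := by rw [hlam]; positivity
  have hset : {ω | lam ≤ X ω} = {ω | ENNReal.ofReal lam ≤ (‖X ω‖₊ : ℝ≥0∞)} := by
    ext ω
    simp only [Set.mem_setOf_eq]
    rw [← enorm_eq_nnnorm, ← ofReal_norm, Real.norm_of_nonneg (hXnn ω),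
      ENNReal.ofReal_le_ofReal_iff (hXnn ω)]
  have hmarkov := meas_ge_le_mul_pow_eLpNorm_enorm μ (p := ENNReal.ofReal p)
    (by simp only [ne_eq, ENNReal.ofReal_eq_zero, not_le]; linarith)
    ENNReal.ofReal_ne_top hXae
    (ε := ENNReal.ofReal lam)
    (by simp only [ne_eq, ENNReal.ofReal_eq_zero, not_le]; linarith)
    (fun h => absurd h ENNReal.ofReal_ne_top)
  rw [hset]
  refine hmarkov.trans ?_
  have hbound : eLpNorm X (ENNReal.ofReal p) μ ≤ ENNReal.ofReal ((2:ℝ)^k * t) * A := by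
    refine (hiter n q hq).trans ?_
    refine mul_le_mul_left ?_ A
    have he : ((2:ℝ≥0∞))^(k*n) = ENNReal.ofReal ((2:ℝ)^(k*n)) := by
      rw [ENNReal.ofReal_pow (by norm_num)]
      norm_num
    rw [he]
    apply ENNReal.ofReal_le_ofReal
    have h1 : (2:ℝ)^(k*n) = ((2:ℝ)^n)^k := by rw [← pow_mul, Nat.mul_comm]
    rw [h1]
    calc ((2:ℝ)^n)^k ≤ (2*s)^k := pow_le_pow_left₀ (by positivity) h2n_le k
      _ = 2^k * s^k := mul_pow 2 s k
      _ = 2^k * t := by rw [hsk]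
  rw [hpP]
  set B := ENNReal.ofReal ((2:ℝ)^k * t) with hB
  set c := ENNReal.ofReal ((8:ℝ)^(k+1) * t / 2) with hc
  have hc0 : c ≠ 0 := by
    simp only [hc, ne_eq, ENNReal.ofReal_eq_zero, not_le]; positivity
  have hctop : c ≠ ∞ := ENNReal.ofReal_ne_top
  have hlamc : ENNReal.ofReal lam = c * A := by
    have h1 : lam = ((8:ℝ)^(k+1) * t / 2) * A.toReal := by rw [hlam]; ring
    rw [h1, ENNReal.ofReal_mul (by positivity), ENNReal.ofReal_toReal hAtop]
  have hkey : (ENNReal.ofReal lam)⁻¹ * (B * A) ≤ ENNReal.ofReal ((1:ℝ) / 4 ^ (k+1)) := by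
    rw [hlamc, ENNReal.mul_inv (Or.inl hc0) (Or.inl hctop)]
    have h1 : c⁻¹ * A⁻¹ * (B * A) = c⁻¹ * B * (A⁻¹ * A) := by ring
    rw [h1, ENNReal.inv_mul_cancel hA0 hAtop, mul_one]
    have h2 : c⁻¹ * B = B / c := by rw [div_eq_mul_inv, mul_comm]
    rw [h2, hB, hc, ← ENNReal.ofReal_div_of_pos (by positivity)]
    apply ENNReal.ofReal_le_ofReal
    have h82 : (8:ℝ)^(k+1) = 2^(k+1) * 4^(k+1) := by rw [← mul_pow]; norm_num
    rw [h82]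
    rw [div_le_div_iff₀ (by positivity) (by positivity)]
    ring_nf
    nlinarith [pow_pos (show (0:ℝ) < 2 by norm_num) k,
      pow_pos (show (0:ℝ) < 4 by norm_num) (k+1)]
  calc (ENNReal.ofReal lam)⁻¹ ^ p * eLpNorm X (ENNReal.ofReal p) μ ^ p
      ≤ (ENNReal.ofReal lam)⁻¹ ^ p * (B * A) ^ p := by
        gcongr
    _ = ((ENNReal.ofReal lam)⁻¹ * (B * A)) ^ p := by
        rw [ENNReal.mul_rpow_of_nonneg (ENNReal.ofReal lam)⁻¹ (B * A)
          (by linarith : (0:ℝ) ≤ p)]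
    _ ≤ (ENNReal.ofReal ((1:ℝ) / 4 ^ (k+1))) ^ p := by
        exact ENNReal.rpow_le_rpow hkey (by linarith)
    _ ≤ (ENNReal.ofReal ((1:ℝ) / 4 ^ (k+1))) ^ (q * s) := by
        apply ENNReal.rpow_le_rpow_of_exponent_ge
        · rw [ENNReal.ofReal_le_one]
          rw [div_le_one (by positivity)]
          exact one_le_pow₀ (by norm_num)
        · rw [hp]; nlinarith
    _ = ENNReal.ofReal (((1:ℝ) / 4 ^ (k+1)) ^ (q * s)) := by
        rw [ENNReal.ofReal_rpow_of_pos (by positivity)]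
end

section
/- Let X be a nonnegative random variable with E X = 1 and suppose there exist constants C > 0 and β > 0 such that N(C t x) ≥ t^β N(x) for all t ≥ 1 and x ≥ 1, where N(t) = −ln P(X ≥ t). Then there exists a constant K̄ depending only on C and β such that ‖X‖_{2p} ≤ K̄ ‖X‖_p for all p ≥ 1. -/
open MeasureTheory ProbabilityTheory
open scoped ENNReal

/-- Tail-squaring consequence of the hypothesis. -/
lemma aux_tail_sq {Ω : Type} [MeasurableSpace Ω] (μ : Measure Ω)
    (X : Ω → ℝ) (C β : ℝ) (hβ : 0 < β)
    (hT : ∀ t : ℝ, 1 ≤ t → ∀ x : ℝ, 1 ≤ x →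
      ((t ^ β : ℝ) : EReal) * tailFun μ X x ≤ tailFun μ X (C * t * x))
    {x : ℝ} (hx : 1 ≤ x) :
    μ {ω | C * 2 ^ (1/β) * x ≤ X ω} ≤ (μ {ω | x ≤ X ω}) ^ 2 := by
  have ht1 : (1:ℝ) ≤ 2 ^ (1/β) := Real.one_le_rpow one_le_two (by positivity)
  have h := hT (2 ^ (1/β)) ht1 x hx
  have h2 : ((2:ℝ) ^ (1/β)) ^ β = 2 := by
    rw [← Real.rpow_mul (by norm_num), one_div, inv_mul_cancel₀ hβ.ne', Real.rpow_one]
  rw [h2] at h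
  unfold tailFun at h
  set a := μ {ω | C * 2 ^ (1/β) * x ≤ X ω} with ha
  set m := μ {ω | x ≤ X ω} with hm
  have key : ENNReal.log a ≤ ENNReal.log (m ^ 2) := by
    rw [ENNReal.log_pow]
    have h' : ENNReal.log a ≤ ((2:ℝ):EReal) * ENNReal.log m :=
      EReal.neg_le_neg_iff.mp (by rwa [mul_neg] at h)
    have hcast : ((2:ℕ):EReal) = ((2:ℝ):EReal) := by norm_cast
    rw [hcast]
    exact h' 
  exact ENNReal.log_le_log_iff.mp key

/-- Remark 3.2: the converse of Lemma 3.1. If `N(Ctx) ≥ t^β N(x)` for `t, x ≥ 1`, then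
`‖X‖_{2p} ≤ K̄ ‖X‖_p` for all `p ≥ 1`, with `K̄ = K̄(C, β)`. -/
theorem stmt_9 (C β : ℝ) (hC : 0 < C) (hβ : 0 < β) :
    ∃ K : ℝ, 0 < K ∧
      ∀ (Ω : Type) [MeasurableSpace Ω] (μ : Measure Ω) [IsProbabilityMeasure μ]
        (X : Ω → ℝ),
        Measurable X → (∀ ω, 0 ≤ X ω) → (∫ ω, X ω ∂μ) = 1 →
        (∀ t : ℝ, 1 ≤ t → ∀ x : ℝ, 1 ≤ x →
          ((t ^ β : ℝ) : EReal) * tailFun μ X x ≤ tailFun μ X (C * t * x)) →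
        ∀ p : ℝ, 1 ≤ p →
          eLpNorm X (ENNReal.ofReal (2 * p)) μ
            ≤ ENNReal.ofReal K * eLpNorm X (ENNReal.ofReal p) μ := by
  set c₀ := C * 2 ^ (1/β) with hc₀
  set b := max c₀ 1 with hbdef
  have hb1 : (1:ℝ) ≤ b := le_max_right _ _
  have hb0 : (0:ℝ) < b := lt_of_lt_of_le one_pos hb1
  refine ⟨3 * Real.exp 1 * b, by positivity, ?_⟩
  intro Ω _ μ _ X hXm hXnn hEX hT p hp
  have hp0 : (0:ℝ) < p := lt_of_lt_of_le one_pos hp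
  have h2p0 : (0:ℝ) < 2 * p := by linarith
  set A : ℝ → ℝ≥0∞ := fun q => ∫⁻ ω, ENNReal.ofReal (X ω ^ q) ∂μ with hA
  -- eLpNorm in terms of A
  have hnorm : ∀ q : ℝ, 0 < q → eLpNorm X (ENNReal.ofReal q) μ = (A q) ^ (1/q) := by
    intro q hq
    rw [eLpNorm_eq_lintegral_rpow_enorm_toReal (by simp [ENNReal.ofReal_eq_zero]; linarith)
      (by simp), ENNReal.toReal_ofReal hq.le]
    congr 1
    apply lintegral_congr; intro ω
    rw [Real.enorm_eq_ofReal (hXnn ω), ENNReal.ofReal_rpow_of_nonneg (hXnn ω) hq.le]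
  -- integrability and A p ≥ 1
  have hInt : Integrable X μ := by
    by_contra h
    rw [integral_undef h] at hEX
    norm_num at hEX
  have hXnn' : (0:Ω→ℝ) ≤ᵐ[μ] X := Filter.Eventually.of_forall hXnn
  have hone : eLpNorm X 1 μ = 1 := by
    rw [eLpNorm_one_eq_lintegral_enorm]
    have : ∫⁻ ω, ‖X ω‖ₑ ∂μ = ∫⁻ ω, ENNReal.ofReal (X ω) ∂μ :=
      lintegral_congr fun ω => Real.enorm_eq_ofReal (hXnn ω)
    rw [this, ← ofReal_integral_eq_lintegral_ofReal hInt hXnn', hEX, ENNReal.ofReal_one]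
  have hApge : 1 ≤ A p := by
    have h1 : (1:ℝ≥0∞) ≤ (A p) ^ (1/p) := by
      rw [← hnorm p hp0, ← hone]
      exact eLpNorm_le_eLpNorm_of_exponent_le
        (by rw [← ENNReal.ofReal_one]; exact ENNReal.ofReal_le_ofReal hp)
        hXm.aestronglyMeasurable
    have h2 := ENNReal.rpow_le_rpow h1 hp0.le
    rwa [ENNReal.one_rpow, ← ENNReal.rpow_mul, one_div, inv_mul_cancel₀ hp0.ne',
      ENNReal.rpow_one] at h2
  -- trivial case A p = ∞
  by_cases hAtop : A p = ∞
  · rw [hnorm p hp0, hAtop, ENNReal.top_rpow_of_pos (by positivity),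
      ENNReal.mul_top (ENNReal.ofReal_pos.mpr (by positivity)).ne']
    exact le_top
  -- Markov
  have hMar : ∀ s : ℝ, 0 < s → ENNReal.ofReal (s ^ p) * μ {ω | s ≤ X ω} ≤ A p := by
    intro s hs
    have hsub : {ω | s ≤ X ω} ⊆ {ω | ENNReal.ofReal (s ^ p) ≤ ENNReal.ofReal (X ω ^ p)} :=
      fun ω hω => ENNReal.ofReal_le_ofReal (Real.rpow_le_rpow hs.le hω hp0.le)
    calc ENNReal.ofReal (s ^ p) * μ {ω | s ≤ X ω}
        ≤ ENNReal.ofReal (s ^ p)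
            * μ {ω | ENNReal.ofReal (s ^ p) ≤ ENNReal.ofReal (X ω ^ p)} :=
          mul_le_mul_right (measure_mono hsub) _
      _ ≤ A p := mul_meas_ge_le_lintegral₀
          (((Real.continuous_rpow_const hp0.le).measurable.comp hXm).ennreal_ofReal.aemeasurable) _
  -- key pointwise tail estimate for t > b
  have hT2 : ∀ t : ℝ, b < t → μ {ω | t ≤ X ω} * ENNReal.ofReal (t ^ p)
      ≤ μ {ω | t ≤ b * X ω} * ENNReal.ofReal (b ^ p) * A p := by
    intro t hbt
    have ht0 : 0 < t := lt_trans hb0 hbt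
    have hx1 : 1 ≤ t / b := (one_le_div hb0).mpr hbt.le
    have haux := aux_tail_sq μ X C β hβ hT hx1
    have hsub : {ω | t ≤ X ω} ⊆ {ω | c₀ * (t / b) ≤ X ω} := by
      intro ω hω
      have hle : c₀ * (t / b) ≤ t := by
        calc c₀ * (t / b) ≤ b * (t / b) :=
              mul_le_mul_of_nonneg_right (le_max_left _ _) (by positivity)
          _ = t := by field_simp
      exact le_trans hle hω
    have hset : {ω | t / b ≤ X ω} = {ω | t ≤ b * X ω} := by
      ext ω
      simp only [Set.mem_setOf_eq]
      rw [div_le_iff₀ hb0, mul_comm]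
    have h1 : μ {ω | t ≤ X ω} ≤ μ {ω | t ≤ b * X ω} * μ {ω | t ≤ b * X ω} := by
      calc μ {ω | t ≤ X ω} ≤ μ {ω | c₀ * (t / b) ≤ X ω} := measure_mono hsub
        _ ≤ μ {ω | t / b ≤ X ω} ^ 2 := haux
        _ = μ {ω | t ≤ b * X ω} * μ {ω | t ≤ b * X ω} := by rw [hset]; ring
    have h2 : ENNReal.ofReal ((t / b) ^ p) * μ {ω | t ≤ b * X ω} ≤ A p := by
      rw [← hset]; exact hMar (t / b) (by positivity)
    have h3 : ENNReal.ofReal (t ^ p)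
        = ENNReal.ofReal (b ^ p) * ENNReal.ofReal ((t / b) ^ p) := by
      rw [← ENNReal.ofReal_mul (by positivity),
        ← Real.mul_rpow hb0.le (div_nonneg ht0.le hb0.le)]
      congr 1
      field_simp
    calc μ {ω | t ≤ X ω} * ENNReal.ofReal (t ^ p)
        ≤ (μ {ω | t ≤ b * X ω} * μ {ω | t ≤ b * X ω})
            * (ENNReal.ofReal (b ^ p) * ENNReal.ofReal ((t / b) ^ p)) := by
          rw [← h3]; exact mul_le_mul_left h1 _
      _ = (μ {ω | t ≤ b * X ω} * ENNReal.ofReal (b ^ p))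
            * (ENNReal.ofReal ((t / b) ^ p) * μ {ω | t ≤ b * X ω}) := by ring
      _ ≤ (μ {ω | t ≤ b * X ω} * ENNReal.ofReal (b ^ p)) * A p := mul_le_mul_right h2 _
  -- layer cake formulas
  have L2 : A (2*p) = ENNReal.ofReal (2*p)
      * ∫⁻ t in Set.Ioi 0, μ {ω | t ≤ X ω} * ENNReal.ofReal (t ^ (2*p - 1)) :=
    lintegral_rpow_eq_lintegral_meas_le_mul μ hXnn' hXm.aemeasurable h2p0
  set I0 := ∫⁻ t in Set.Ioi (0:ℝ), μ {ω | t ≤ b * X ω} * ENNReal.ofReal (t ^ (p-1)) with hI0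
  have LbX : ENNReal.ofReal (b ^ p) * A p = ENNReal.ofReal p * I0 := by
    rw [hI0]
    have hlc := lintegral_rpow_eq_lintegral_meas_le_mul μ (f := fun ω => b * X ω)
      (Filter.Eventually.of_forall fun ω => mul_nonneg hb0.le (hXnn ω))
      (hXm.const_mul b).aemeasurable hp0
    rw [← hlc, ← lintegral_const_mul' _ _ ENNReal.ofReal_ne_top]
    apply lintegral_congr
    intro ω
    rw [← ENNReal.ofReal_mul (by positivity), ← Real.mul_rpow hb0.le (hXnn ω)]
  -- split the integral
  set I1 := ∫⁻ t in Set.Ioc (0:ℝ) b, μ {ω | t ≤ X ω} * ENNReal.ofReal (t ^ (2*p - 1)) with hI1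
  set I2 := ∫⁻ t in Set.Ioi b, μ {ω | t ≤ X ω} * ENNReal.ofReal (t ^ (2*p - 1)) with hI2
  have hsplit : ∫⁻ t in Set.Ioi (0:ℝ), μ {ω | t ≤ X ω} * ENNReal.ofReal (t ^ (2*p - 1))
      = I1 + I2 := by
    rw [hI1, hI2, ← lintegral_union measurableSet_Ioi (Set.Ioc_disjoint_Ioi le_rfl),
      Set.Ioc_union_Ioi_eq_Ioi hb0.le]
  -- bound part 1
  have hpart1 : I1 ≤ ENNReal.ofReal (b ^ (2*p - 1)) * ENNReal.ofReal b := by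
    calc I1 ≤ ∫⁻ _ in Set.Ioc (0:ℝ) b, ENNReal.ofReal (b ^ (2*p - 1)) := by
          apply setLIntegral_mono' measurableSet_Ioc
          intro t ht
          calc μ {ω | t ≤ X ω} * ENNReal.ofReal (t ^ (2*p - 1))
              ≤ 1 * ENNReal.ofReal (b ^ (2*p - 1)) :=
                mul_le_mul' prob_le_one (ENNReal.ofReal_le_ofReal
                  (Real.rpow_le_rpow ht.1.le ht.2 (by linarith)))
            _ = ENNReal.ofReal (b ^ (2*p - 1)) := one_mul _
      _ = ENNReal.ofReal (b ^ (2*p - 1)) * ENNReal.ofReal b := by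
          rw [setLIntegral_const, Real.volume_Ioc, sub_zero]
  -- bound part 2
  have hpart2 : I2 ≤ ENNReal.ofReal (b ^ p) * A p * I0 := by
    rw [hI0]
    calc I2 ≤ ∫⁻ t in Set.Ioi b, (ENNReal.ofReal (b ^ p) * A p)
          * (μ {ω | t ≤ b * X ω} * ENNReal.ofReal (t ^ (p-1))) := by
          apply setLIntegral_mono' measurableSet_Ioi
          intro t ht
          have ht0 : 0 < t := lt_trans hb0 ht
          have hpow : ENNReal.ofReal (t ^ (2*p - 1))
              = ENNReal.ofReal (t ^ p) * ENNReal.ofReal (t ^ (p-1)) := by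
            rw [← ENNReal.ofReal_mul (by positivity), ← Real.rpow_add ht0]
            ring_nf
          rw [hpow, ← mul_assoc]
          calc μ {ω | t ≤ X ω} * ENNReal.ofReal (t ^ p) * ENNReal.ofReal (t ^ (p-1))
              ≤ μ {ω | t ≤ b * X ω} * ENNReal.ofReal (b ^ p) * A p
                  * ENNReal.ofReal (t ^ (p-1)) := mul_le_mul_left (hT2 t ht) _
            _ = (ENNReal.ofReal (b ^ p) * A p)
                  * (μ {ω | t ≤ b * X ω} * ENNReal.ofReal (t ^ (p-1))) := by ring
      _ = (ENNReal.ofReal (b ^ p) * A p)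
            * ∫⁻ t in Set.Ioi b, μ {ω | t ≤ b * X ω} * ENNReal.ofReal (t ^ (p-1)) :=
          lintegral_const_mul' _ _ (ENNReal.mul_ne_top ENNReal.ofReal_ne_top hAtop)
      _ ≤ _ := by
          gcongr
  -- combine
  set E := ENNReal.ofReal ((Real.exp 1 * b) ^ (2*p)) with hE
  have hEB : ENNReal.ofReal (b ^ p) * ENNReal.ofReal (b ^ p) ≤ E := by
    rw [← ENNReal.ofReal_mul (by positivity)]
    apply ENNReal.ofReal_le_ofReal
    rw [← Real.rpow_add hb0]
    calc b ^ (p + p) ≤ (Real.exp 1 * b) ^ (p + p) := by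
          apply Real.rpow_le_rpow hb0.le _ (by positivity)
          nlinarith [Real.exp_one_gt_d9, hb0]
      _ = (Real.exp 1 * b) ^ (2*p) := by ring_nf
  have hterm1 : ENNReal.ofReal (2*p) * (ENNReal.ofReal (b ^ (2*p - 1)) * ENNReal.ofReal b)
      ≤ E := by
    rw [← ENNReal.ofReal_mul (by positivity), ← ENNReal.ofReal_mul (by positivity)]
    apply ENNReal.ofReal_le_ofReal
    have hb2p : b ^ (2*p - 1) * b = b ^ (2*p) := by
      nth_rewrite 2 [show b = b ^ (1:ℝ) from (Real.rpow_one b).symm]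
      rw [← Real.rpow_add hb0]
      ring_nf
    rw [mul_assoc, hb2p, Real.mul_rpow (Real.exp_pos 1).le hb0.le, Real.exp_one_rpow]
    have h2pe : 2*p ≤ Real.exp (2*p) := by
      have := Real.add_one_le_exp (2*p)
      linarith
    nlinarith [mul_le_mul_of_nonneg_right h2pe (Real.rpow_nonneg hb0.le (2*p))]
  have hone_le_E : (1:ℝ≥0∞) ≤ E := by
    rw [hE, ← ENNReal.ofReal_one]
    exact ENNReal.ofReal_le_ofReal
      (Real.one_le_rpow (by nlinarith [Real.exp_one_gt_d9, hb0]) (by positivity))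
  have hfinal : A (2*p) ≤ 3 * E * (A p * A p) := by
    calc A (2*p) = ENNReal.ofReal (2*p) * (I1 + I2) := by rw [L2, hsplit]
      _ = ENNReal.ofReal (2*p) * I1 + ENNReal.ofReal (2*p) * I2 := mul_add _ _ _
      _ ≤ ENNReal.ofReal (2*p) * (ENNReal.ofReal (b ^ (2*p - 1)) * ENNReal.ofReal b)
            + ENNReal.ofReal (2*p) * (ENNReal.ofReal (b ^ p) * A p * I0) :=
          add_le_add (mul_le_mul_right hpart1 _) (mul_le_mul_right hpart2 _)
      _ = ENNReal.ofReal (2*p) * (ENNReal.ofReal (b ^ (2*p - 1)) * ENNReal.ofReal b)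
            + 2 * ((ENNReal.ofReal (b ^ p) * A p) * (ENNReal.ofReal (b ^ p) * A p)) := by
          congr 1
          rw [show ENNReal.ofReal (2*p) = 2 * ENNReal.ofReal p by
            rw [ENNReal.ofReal_mul (by norm_num), ENNReal.ofReal_ofNat]]
          calc 2 * ENNReal.ofReal p * (ENNReal.ofReal (b ^ p) * A p * I0)
              = 2 * ((ENNReal.ofReal (b ^ p) * A p) * (ENNReal.ofReal p * I0)) := by ring
            _ = _ := by rw [← LbX]
      _ ≤ E + 2 * (E * (A p * A p)) := by
          refine add_le_add hterm1 (mul_le_mul_right ?_ 2)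
          calc (ENNReal.ofReal (b ^ p) * A p) * (ENNReal.ofReal (b ^ p) * A p)
              = (ENNReal.ofReal (b ^ p) * ENNReal.ofReal (b ^ p)) * (A p * A p) := by ring
            _ ≤ E * (A p * A p) := mul_le_mul_left hEB _
      _ ≤ E * (A p * A p) + 2 * (E * (A p * A p)) := by
          refine add_le_add ?_ le_rfl
          calc E = E * 1 := (mul_one E).symm
            _ ≤ E * (A p * A p) := by
                apply mul_le_mul_right
                calc (1:ℝ≥0∞) = 1 * 1 := (one_mul 1).symm
                  _ ≤ A p * A p := mul_le_mul' hApge hApge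
      _ = 3 * E * (A p * A p) := by ring
  -- conclude
  rw [hnorm (2*p) h2p0, hnorm p hp0]
  have hmono := ENNReal.rpow_le_rpow hfinal (by positivity : (0:ℝ) ≤ 1/(2*p))
  refine le_trans hmono ?_
  have hsplit3 : (3 * E * (A p * A p)) ^ (1/(2*p))
      = 3 ^ (1/(2*p)) * E ^ (1/(2*p)) * (A p * A p) ^ (1/(2*p)) := by
    rw [ENNReal.mul_rpow_of_nonneg _ _ (by positivity),
      ENNReal.mul_rpow_of_nonneg _ _ (by positivity)]
  rw [hsplit3]
  have hE' : E ^ (1/(2*p)) = ENNReal.ofReal (Real.exp 1 * b) := by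
    rw [hE, ← ENNReal.ofReal_rpow_of_nonneg (by positivity) (by positivity),
      ← ENNReal.rpow_mul, mul_one_div, div_self h2p0.ne', ENNReal.rpow_one]
  have hA' : (A p * A p) ^ (1/(2*p)) = (A p) ^ (1/p) := by
    rw [← pow_two, ← ENNReal.rpow_natCast (A p) 2, ← ENNReal.rpow_mul]
    congr 1
    push_cast
    field_simp
  rw [hE', hA']
  have h3 : (3:ℝ≥0∞) ^ (1/(2*p)) ≤ 3 := by
    calc (3:ℝ≥0∞) ^ (1/(2*p)) ≤ 3 ^ (1:ℝ) :=
          ENNReal.rpow_le_rpow_of_exponent_le (by norm_num)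
            (by rw [div_le_one h2p0]; linarith)
      _ = 3 := ENNReal.rpow_one 3
  calc 3 ^ (1/(2*p)) * ENNReal.ofReal (Real.exp 1 * b) * (A p) ^ (1/p)
      ≤ 3 * ENNReal.ofReal (Real.exp 1 * b) * (A p) ^ (1/p) := by gcongr
    _ = ENNReal.ofReal (3 * Real.exp 1 * b) * (A p) ^ (1/p) := by
        rw [show (3:ℝ≥0∞) = ENNReal.ofReal 3 by rw [ENNReal.ofReal_ofNat],
          ← ENNReal.ofReal_mul (by norm_num), mul_assoc]
end

section
/- Let k be a positive integer and X a nonnegative random variable with E X = 1 satisfying ‖X‖_{2p} ≤ 2^k ‖X‖_p for all p ≥ 1, with N(e) computed from N(t) = −ln P(X ≥ t). With C = 8^{k+1}, one has N(e) ≥ 1 and, for every t ≥ 1, N(C t e) ≥ t^{1/k}; consequently ln k − N(t) ≤ −N(t)/2 for every t ≥ e C max(1, 2 ln k)^k. -/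
open MeasureTheory ProbabilityTheory
open scoped ENNReal

private lemma tailFun_ge_of_meas_le {Ω : Type*} [MeasurableSpace Ω] {μ : Measure Ω} {X : Ω → ℝ}
    {t a : ℝ} (h : μ {ω | t ≤ X ω} ≤ ENNReal.ofReal (Real.exp (-a))) :
    (a : EReal) ≤ tailFun μ X t := by
  have h1 : ENNReal.log (μ {ω | t ≤ X ω}) ≤ ((-a : ℝ) : EReal) := by
    calc ENNReal.log (μ {ω | t ≤ X ω})
        ≤ ENNReal.log (ENNReal.ofReal (Real.exp (-a))) := ENNReal.log_monotone h
      _ = ((-a : ℝ) : EReal) := by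
          rw [ENNReal.log_ofReal_of_pos (Real.exp_pos _), Real.log_exp]
  have h2 : -(((-a : ℝ)) : EReal) ≤ - ENNReal.log (μ {ω | t ≤ X ω}) :=
    EReal.neg_le_neg_iff.mpr h1
  rwa [EReal.coe_neg, neg_neg] at h2

private lemma tailFun_mono {Ω : Type*} [MeasurableSpace Ω] (μ : Measure Ω) (X : Ω → ℝ)
    {s t : ℝ} (hst : s ≤ t) : tailFun μ X s ≤ tailFun μ X t := by
  have hsub : {ω | t ≤ X ω} ⊆ {ω | s ≤ X ω} := fun ω hω => le_trans hst hω
  have := ENNReal.log_monotone (measure_mono (μ := μ) hsub)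
  exact EReal.neg_le_neg_iff.mpr this

/-- Inequality (3.8) and the facts leading to it: N(e) >= 1; N(C t e) >= t^(1/k) for t >= 1;
and ln k - N(t) <= -N(t)/2 for t >= e C max(1, 2 ln k)^k, where C = 8^(k+1). -/
theorem stmt_13 (k : ℕ) (hk : 0 < k)
    {Ω : Type*} [MeasurableSpace Ω] (μ : Measure Ω) [IsProbabilityMeasure μ]
    (X : Ω → ℝ) (hXm : Measurable X) (hXnn : ∀ ω, 0 ≤ X ω)
    (hmean : (∫ ω, X ω ∂μ) = 1)
    (hMC : ∀ q : ℝ, 1 ≤ q →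
      eLpNorm X (ENNReal.ofReal (2 * q)) μ ≤ 2 ^ k * eLpNorm X (ENNReal.ofReal q) μ) :
    (1 : EReal) ≤ tailFun μ X (Real.exp 1) ∧
    (∀ t : ℝ, 1 ≤ t →
      ((t ^ (1 / (k : ℝ)) : ℝ) : EReal)
        ≤ tailFun μ X ((8 : ℝ) ^ (k + 1) * t * Real.exp 1)) ∧
    (∀ t : ℝ, Real.exp 1 * (8 : ℝ) ^ (k + 1) * (max 1 (2 * Real.log k)) ^ k ≤ t →
      (Real.log k : EReal) - tailFun μ X t ≤ -(tailFun μ X t) / 2) := by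
  -- X is integrable (else the integral would be 0, not 1)
  have hInt : Integrable X μ := by
    by_contra h
    rw [integral_undef h] at hmean
    norm_num at hmean
  have hnn : ∀ ω, ((‖X ω‖₊ : ℝ≥0∞)) = ENNReal.ofReal (X ω) := fun ω => by
    rw [← enorm_eq_nnnorm, ← ofReal_norm, Real.norm_of_nonneg (hXnn ω)]
  -- eLpNorm X 1 μ = 1
  have h1 : eLpNorm X 1 μ = 1 := by
    rw [eLpNorm_one_eq_lintegral_enorm]
    simp_rw [enorm_eq_nnnorm]
    simp_rw [hnn]
    rw [← ofReal_integral_eq_lintegral_ofReal hInt (Filter.Eventually.of_forall hXnn), hmean,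
      ENNReal.ofReal_one]
  -- iterated moment bound
  have hMC' : ∀ j : ℕ, eLpNorm X (ENNReal.ofReal ((2:ℝ) ^ j)) μ
      ≤ ENNReal.ofReal ((2:ℝ) ^ (k * j)) := by
    intro j
    induction j with
    | zero => simp [h1]
    | succ j ih =>
      have hq : (1:ℝ) ≤ 2 ^ j := one_le_pow₀ (by norm_num)
      have step := hMC ((2:ℝ) ^ j) hq
      have h2k : ((2:ℝ≥0∞)) ^ k = ENNReal.ofReal ((2:ℝ) ^ k) := by
        rw [ENNReal.ofReal_pow (by norm_num)]
        norm_num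
      calc eLpNorm X (ENNReal.ofReal ((2:ℝ) ^ (j + 1))) μ
          = eLpNorm X (ENNReal.ofReal (2 * (2:ℝ) ^ j)) μ := by ring_nf
        _ ≤ 2 ^ k * eLpNorm X (ENNReal.ofReal ((2:ℝ) ^ j)) μ := step
        _ ≤ 2 ^ k * ENNReal.ofReal ((2:ℝ) ^ (k * j)) := by gcongr
        _ = ENNReal.ofReal ((2:ℝ) ^ (k * (j + 1))) := by
            rw [h2k, ← ENNReal.ofReal_mul (by positivity), ← pow_add]
            ring_nf
  -- main tail bound
  have key : ∀ s : ℝ, 1 ≤ s → μ {ω | (8:ℝ) ^ (k + 1) * s * Real.exp 1 ≤ X ω}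
      ≤ ENNReal.ofReal (Real.exp (-(s ^ (1 / (k:ℝ))))) := by
    intro s hs
    have hs0 : (0:ℝ) < s := lt_of_lt_of_le one_pos hs
    set u : ℝ := s ^ (1 / (k:ℝ)) with hu
    have hu1 : 1 ≤ u := Real.one_le_rpow hs (by positivity)
    obtain ⟨n, hn1, hn2⟩ := exists_nat_pow_near hu1 (one_lt_two (α := ℝ))
    set j : ℕ := n + 1 with hj
    set p : ℝ := (2:ℝ) ^ j with hp
    have hpu : u ≤ p := hn2.le
    have hp2u : p ≤ 2 * u := by
      have h2 : p = 2 * (2:ℝ) ^ n := by rw [hp, hj]; ring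
      rw [h2]; nlinarith
    have hp1 : (1:ℝ) ≤ p := le_trans hu1 hpu
    have hp0 : (0:ℝ) < p := lt_of_lt_of_le one_pos hp1
    set t0 : ℝ := (8:ℝ) ^ (k + 1) * s * Real.exp 1 with ht0
    have ht0pos : (0:ℝ) < t0 := by positivity
    -- u^k = s
    have huk : u ^ k = s := by
      rw [hu, one_div, Real.rpow_inv_natCast_pow hs0.le hk.ne']
    -- 2^(k*j) ≤ 8^(k+1) * s
    have hkey : (2:ℝ) ^ (k * j) ≤ 8 ^ (k + 1) * s := by
      have e1 : (2:ℝ) ^ (k * j) = p ^ k := by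
        rw [hp, ← pow_mul, mul_comm]
      have e2 : p ^ k ≤ (2 * u) ^ k := pow_le_pow_left₀ hp0.le hp2u k
      have e3 : ((2:ℝ) * u) ^ k = 2 ^ k * s := by rw [mul_pow, huk]
      have e4 : (2:ℝ) ^ k ≤ 8 ^ (k + 1) := by
        calc (2:ℝ) ^ k ≤ 8 ^ k := pow_le_pow_left₀ (by norm_num) (by norm_num) k
          _ ≤ 8 ^ (k + 1) := pow_le_pow_right₀ (by norm_num) (Nat.le_succ k)
      have e5 : (2:ℝ) ^ k * s ≤ 8 ^ (k + 1) * s := by nlinarith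
      linarith [e2.trans_eq e3]
    -- the ratio is at most exp(-1)
    have hratio : t0⁻¹ * (2:ℝ) ^ (k * j) ≤ Real.exp (-1) := by
      rw [Real.exp_neg]
      rw [inv_mul_le_iff₀ ht0pos, ht0]
      have hexp : (8:ℝ) ^ (k + 1) * s * Real.exp 1 * (Real.exp 1)⁻¹
          = (8:ℝ) ^ (k + 1) * s := by
        field_simp
      rw [hexp]
      exact hkey
    -- Markov
    set P : ℝ≥0∞ := ENNReal.ofReal p with hP
    have hP0 : P ≠ 0 := by
      rw [hP]; simp [ENNReal.ofReal_eq_zero]; linarith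
    have hPt : P ≠ ∞ := ENNReal.ofReal_ne_top
    have hPtoReal : P.toReal = p := ENNReal.toReal_ofReal hp0.le
    set ε : ℝ≥0∞ := ENNReal.ofReal t0 with hε
    have hε0 : ε ≠ 0 := by
      rw [hε]; simp [ENNReal.ofReal_eq_zero]; linarith
    have hset : {ω | t0 ≤ X ω} = {ω | ε ≤ (‖X ω‖₊ : ℝ≥0∞)} := by
      ext ω
      simp only [Set.mem_setOf_eq, hnn ω, hε]
      rw [ENNReal.ofReal_le_ofReal_iff (hXnn ω)]
    have hm := meas_ge_le_mul_pow_eLpNorm_enorm μ hP0 hPt hXm.aestronglyMeasurable hε0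
      (fun h => absurd h ENNReal.ofReal_ne_top)
    rw [hPtoReal] at hm
    have hLp : eLpNorm X P μ ≤ ENNReal.ofReal ((2:ℝ) ^ (k * j)) := hMC' j
    have hεinv : ε⁻¹ = ENNReal.ofReal t0⁻¹ := by
      rw [hε, ENNReal.ofReal_inv_of_pos ht0pos]
    calc μ {ω | t0 ≤ X ω} = μ {ω | ε ≤ (‖X ω‖₊ : ℝ≥0∞)} := by rw [hset]
      _ ≤ ε⁻¹ ^ p * eLpNorm X P μ ^ p := hm
      _ ≤ ε⁻¹ ^ p * ENNReal.ofReal ((2:ℝ) ^ (k * j)) ^ p := by gcongr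
      _ = (ε⁻¹ * ENNReal.ofReal ((2:ℝ) ^ (k * j))) ^ p :=
          (ENNReal.mul_rpow_of_nonneg _ _ hp0.le).symm
      _ = ENNReal.ofReal (t0⁻¹ * (2:ℝ) ^ (k * j)) ^ p := by
          rw [hεinv, ← ENNReal.ofReal_mul (by positivity)]
      _ = ENNReal.ofReal ((t0⁻¹ * (2:ℝ) ^ (k * j)) ^ p) :=
          ENNReal.ofReal_rpow_of_pos (by positivity)
      _ ≤ ENNReal.ofReal (Real.exp (-u)) := by
          apply ENNReal.ofReal_le_ofReal
          calc (t0⁻¹ * (2:ℝ) ^ (k * j)) ^ p ≤ Real.exp (-1) ^ p :=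
                Real.rpow_le_rpow (by positivity) hratio hp0.le
            _ = Real.exp (-p) := by
                rw [Real.exp_neg, Real.inv_rpow (Real.exp_pos 1).le, Real.exp_one_rpow,
                  ← Real.exp_neg]
            _ ≤ Real.exp (-u) := Real.exp_le_exp.mpr (by linarith)
  -- Part 1: N(e) ≥ 1
  have part1 : (1 : EReal) ≤ tailFun μ X (Real.exp 1) := by
    apply tailFun_ge_of_meas_le
    set ε : ℝ≥0∞ := ENNReal.ofReal (Real.exp 1) with hε
    have hε0 : ε ≠ 0 := by
      rw [hε]; simp [ENNReal.ofReal_eq_zero]; exact Real.exp_pos 1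
    have hset : {ω | Real.exp 1 ≤ X ω} = {ω | ε ≤ (‖X ω‖₊ : ℝ≥0∞)} := by
      ext ω
      simp only [Set.mem_setOf_eq, hnn ω, hε]
      rw [ENNReal.ofReal_le_ofReal_iff (hXnn ω)]
    have hm := meas_ge_le_mul_pow_eLpNorm_enorm μ (p := 1) one_ne_zero ENNReal.one_ne_top
      hXm.aestronglyMeasurable hε0 (fun h => absurd h ENNReal.ofReal_ne_top)
    simp only [ENNReal.toReal_one, ENNReal.rpow_one, h1, mul_one] at hm
    calc μ {ω | Real.exp 1 ≤ X ω} = μ {ω | ε ≤ (‖X ω‖₊ : ℝ≥0∞)} := by rw [hset]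
      _ ≤ ε⁻¹ := hm
      _ = ENNReal.ofReal (Real.exp (-1)) := by
          rw [hε, ← ENNReal.ofReal_inv_of_pos (Real.exp_pos 1), ← Real.exp_neg]
  -- Part 2
  have part2 : ∀ t : ℝ, 1 ≤ t →
      ((t ^ (1 / (k : ℝ)) : ℝ) : EReal)
        ≤ tailFun μ X ((8 : ℝ) ^ (k + 1) * t * Real.exp 1) :=
    fun t ht => tailFun_ge_of_meas_le (key t ht)
  refine ⟨part1, part2, ?_⟩
  -- Part 3
  intro t ht
  set M : ℝ := max 1 (2 * Real.log k) with hM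
  have hM1 : (1:ℝ) ≤ M := le_max_left _ _
  have hMk : (1:ℝ) ≤ M ^ k := one_le_pow₀ hM1
  have hMkpow : ((M ^ k : ℝ)) ^ (1 / (k:ℝ)) = M := by
    rw [one_div, Real.pow_rpow_inv_natCast (by linarith) hk.ne']
  have h2 := part2 (M ^ k) hMk
  rw [hMkpow] at h2
  have harg : (8:ℝ) ^ (k + 1) * M ^ k * Real.exp 1 ≤ t := by
    have : (8:ℝ) ^ (k + 1) * M ^ k * Real.exp 1
        = Real.exp 1 * (8:ℝ) ^ (k + 1) * M ^ k := by ring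
    linarith [ht, this.le]
  have hmono := tailFun_mono μ X harg
  have hN : ((2 * Real.log k : ℝ) : EReal) ≤ tailFun μ X t := by
    refine le_trans ?_ (le_trans h2 hmono)
    exact_mod_cast (le_max_right 1 (2 * Real.log k))
  have hlk : (0:ℝ) ≤ Real.log k := Real.log_nonneg (by exact_mod_cast hk)
  set N : EReal := tailFun μ X t with hNdef
  clear_value N
  induction N using EReal.rec with
  | bot =>
    exfalso
    exact absurd (le_bot_iff.mp hN) (EReal.coe_ne_bot _)
  | coe n =>
    have hn : 2 * Real.log k ≤ n := EReal.coe_le_coe_iff.mp hN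
    have : ((Real.log k - n : ℝ) : EReal) ≤ ((-n / 2 : ℝ) : EReal) := by
      rw [EReal.coe_le_coe_iff]
      linarith
    calc (Real.log k : EReal) - (n : EReal) = ((Real.log k - n : ℝ) : EReal) :=
          (EReal.coe_sub _ _).symm
      _ ≤ ((-n / 2 : ℝ) : EReal) := this
      _ = -(n : EReal) / 2 := by
          rw [EReal.coe_div, EReal.coe_neg]; norm_cast
  | top =>
    rw [EReal.sub_top, EReal.neg_top]
    exact bot_le
end

section
/- Let k be a positive integer, C > 0, and let N_1, …, N_n : [0,∞) → [0,∞] be nondecreasing functions satisfying N_i(C t x) ≥ t^{1/k} N_i(x) for all t, x ≥ 1. Then there is a constant C'(k) depending only on k and C such that for all nonnegative reals b_1, …, b_n and every p ≥ 1: (1/C') · S₂ ≤ S₁ ≤ C' · S₂, where S₁ = sup{ ∑_i b_i ∏_{l=1}^k (1 + a_{i,l}) : (a_{i,l}) nonnegative with ∑_i N_i(a_{i,l}^k) ≤ p for every l ≤ k } and S₂ = sup{ ∑_i b_i (1 + w_i) : (w_i) nonnegative with ∑_i N_i(w_i) ≤ p }. -/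
open scoped ENNReal

private lemma aux1 (k : ℕ) (hk : 0 < k) (a : ℝ) (ha : 0 ≤ a) :
    1 + a ^ k ≤ (1 + a) ^ k := by
  obtain ⟨m, rfl⟩ := Nat.exists_eq_add_of_lt hk
  clear hk
  simp only [Nat.zero_add]
  induction m with
  | zero => simp
  | succ m ih =>
    have h1 : (0:ℝ) ≤ a ^ (m+1) := pow_nonneg ha _
    have hs : a ^ (m+1+1) = a ^ (m+1) * a := pow_succ a (m+1)
    calc 1 + a ^ (m+1+1) ≤ (1 + a ^ (m+1)) * (1 + a) := by nlinarith [mul_nonneg h1 ha]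
      _ ≤ (1 + a) ^ (m+1) * (1 + a) := mul_le_mul_of_nonneg_right ih (by linarith)
      _ = (1 + a) ^ (m+1+1) := by ring

private lemma aux2 (k : ℕ) (a : ℝ) (ha : 0 ≤ a) :
    (1 + a) ^ k ≤ 2 ^ k * (1 + a ^ k) := by
  induction k with
  | zero => norm_num
  | succ m ih =>
    have h2 : (0:ℝ) ≤ 2 ^ m := by positivity
    have hkey : (1 + a ^ m) * (1 + a) ≤ 2 * (1 + a ^ (m+1)) := by
      have hs : a ^ (m+1) = a ^ m * a := pow_succ a m
      rcases le_total a 1 with h | h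
      · have hm1 : a ^ m ≤ 1 := pow_le_one₀ ha h
        nlinarith [mul_nonneg (by linarith : (0:ℝ) ≤ 1 - a) (by linarith : (0:ℝ) ≤ 1 - a ^ m)]
      · have hm1 : (1:ℝ) ≤ a ^ m := one_le_pow₀ h
        nlinarith [mul_nonneg (by linarith : (0:ℝ) ≤ a - 1) (by linarith : (0:ℝ) ≤ a ^ m - 1)]
    calc (1 + a) ^ (m+1) = (1 + a) ^ m * (1 + a) := by ring
      _ ≤ (2 ^ m * (1 + a ^ m)) * (1 + a) := by
          apply mul_le_mul_of_nonneg_right ih (by linarith)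
      _ = 2 ^ m * ((1 + a ^ m) * (1 + a)) := by ring
      _ ≤ 2 ^ m * (2 * (1 + a ^ (m+1))) := mul_le_mul_of_nonneg_left hkey h2
      _ = 2 ^ (m+1) * (1 + a ^ (m+1)) := by ring

/-- Equivalence (4.2) for `d = 1`: the supremum over `k`-fold products is comparable to the
supremum over single factors. -/
theorem stmt_15 (k : ℕ) (hk : 0 < k) (C : ℝ) (hC : 0 < C) :
    ∃ C' : ℝ, 0 < C' ∧
      ∀ (n : ℕ) (N : Fin n → ℝ → ℝ≥0∞),
        (∀ i, MonotoneOn (N i) (Set.Ici 0)) →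
        (∀ i, ∀ t : ℝ, 1 ≤ t → ∀ x : ℝ, 1 ≤ x →
          ENNReal.ofReal (t ^ (1 / (k : ℝ))) * N i x ≤ N i (C * t * x)) →
        ∀ (b : Fin n → ℝ), (∀ i, 0 ≤ b i) →
        ∀ p : ℝ, 1 ≤ p →
          (1 / C') * sSup {s : ℝ | ∃ w : Fin n → ℝ, (∀ i, 0 ≤ w i) ∧
                (∑ i, N i (w i)) ≤ ENNReal.ofReal p ∧
                s = ∑ i, b i * (1 + w i)}
              ≤ sSup {s : ℝ | ∃ a : Fin n → ℕ → ℝ, (∀ i l, 0 ≤ a i l) ∧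
                (∀ l < k, (∑ i, N i ((a i l) ^ k)) ≤ ENNReal.ofReal p) ∧
                s = ∑ i, b i * ∏ l ∈ Finset.range k, (1 + a i l)} ∧
            sSup {s : ℝ | ∃ a : Fin n → ℕ → ℝ, (∀ i l, 0 ≤ a i l) ∧
                (∀ l < k, (∑ i, N i ((a i l) ^ k)) ≤ ENNReal.ofReal p) ∧
                s = ∑ i, b i * ∏ l ∈ Finset.range k, (1 + a i l)}
              ≤ C' * sSup {s : ℝ | ∃ w : Fin n → ℝ, (∀ i, 0 ≤ w i) ∧
                (∑ i, N i (w i)) ≤ ENNReal.ofReal p ∧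
                s = ∑ i, b i * (1 + w i)} := by
  refine ⟨(k : ℝ) * 2 ^ k, by positivity, ?_⟩
  intro n N hmono hgrow b hb p hp
  set T₂ : Set ℝ := {s : ℝ | ∃ w : Fin n → ℝ, (∀ i, 0 ≤ w i) ∧
      (∑ i, N i (w i)) ≤ ENNReal.ofReal p ∧ s = ∑ i, b i * (1 + w i)} with hT₂def
  set T₁ : Set ℝ := {s : ℝ | ∃ a : Fin n → ℕ → ℝ, (∀ i l, 0 ≤ a i l) ∧
      (∀ l < k, (∑ i, N i ((a i l) ^ k)) ≤ ENNReal.ofReal p) ∧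
      s = ∑ i, b i * ∏ l ∈ Finset.range k, (1 + a i l)} with hT₁def
  have hCpos : (0:ℝ) < (k : ℝ) * 2 ^ k := by positivity
  have hCone : (1:ℝ) ≤ (k : ℝ) * 2 ^ k := by
    have h1 : (1:ℝ) ≤ (k:ℝ) := by exact_mod_cast hk
    have h2 : (1:ℝ) ≤ 2 ^ k := one_le_pow₀ (by norm_num)
    nlinarith
  -- nonnegativity of elements of T₂
  have nn2 : ∀ s ∈ T₂, 0 ≤ s := by
    rintro s ⟨w, hw, _, rfl⟩
    apply Finset.sum_nonneg
    intro i _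
    have := hw i
    have := hb i
    positivity
  -- key1 : every element of T₁ is bounded by 2^k times a sum of k elements of T₂
  have key1 : ∀ s ∈ T₁, ∃ g : ℕ → ℝ, (∀ l < k, g l ∈ T₂) ∧
      s ≤ 2 ^ k * ∑ l ∈ Finset.range k, g l := by
    rintro s ⟨a, ha, hcon, rfl⟩
    refine ⟨fun l => ∑ i, b i * (1 + a i l ^ k), ?_, ?_⟩
    · intro l hl
      exact ⟨fun i => a i l ^ k, fun i => pow_nonneg (ha i l) k, hcon l hl, rfl⟩
    · have hne : (Finset.range k).Nonempty := ⟨0, Finset.mem_range.mpr hk⟩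
      have peri : ∀ i, ∏ l ∈ Finset.range k, (1 + a i l) ≤
          2 ^ k * ∑ l ∈ Finset.range k, (1 + a i l ^ k) := by
        intro i
        set A := (Finset.range k).sup' hne (a i) with hA
        have hA0 : 0 ≤ A := le_trans (ha i 0) (Finset.le_sup' (a i) (Finset.mem_range.mpr hk))
        have step1 : ∏ l ∈ Finset.range k, (1 + a i l) ≤ (1 + A) ^ k := by
          calc ∏ l ∈ Finset.range k, (1 + a i l) ≤ ∏ l ∈ Finset.range k, (1 + A) := by
                apply Finset.prod_le_prod
                · intro l _; have := ha i l; linarith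
                · intro l hl; have := Finset.le_sup' (a i) hl; linarith
            _ = (1 + A) ^ k := by rw [Finset.prod_const, Finset.card_range]
        have step2 : (1 + A) ^ k ≤ 2 ^ k * (1 + A ^ k) := aux2 k A hA0
        have step3 : A ^ k ≤ ∑ l ∈ Finset.range k, a i l ^ k := by
          obtain ⟨l₀, hl₀, hEq⟩ := Finset.exists_mem_eq_sup' hne (a i)
          rw [hA, hEq]
          exact Finset.single_le_sum (fun l _ => pow_nonneg (ha i l) k) hl₀
        have step4 : (1:ℝ) + ∑ l ∈ Finset.range k, a i l ^ k ≤
            ∑ l ∈ Finset.range k, (1 + a i l ^ k) := by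
          rw [Finset.sum_add_distrib, Finset.sum_const, Finset.card_range, nsmul_eq_mul]
          have h1 : (1:ℝ) ≤ (k:ℝ) := by exact_mod_cast hk
          linarith
        have h2k : (0:ℝ) ≤ 2 ^ k := by positivity
        calc ∏ l ∈ Finset.range k, (1 + a i l) ≤ 2 ^ k * (1 + A ^ k) := step1.trans step2
          _ ≤ 2 ^ k * ∑ l ∈ Finset.range k, (1 + a i l ^ k) := by
              apply mul_le_mul_of_nonneg_left _ h2k
              linarith
      calc ∑ i, b i * ∏ l ∈ Finset.range k, (1 + a i l)
          ≤ ∑ i, b i * (2 ^ k * ∑ l ∈ Finset.range k, (1 + a i l ^ k)) := by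
            apply Finset.sum_le_sum
            intro i _
            exact mul_le_mul_of_nonneg_left (peri i) (hb i)
        _ = ∑ i, ∑ l ∈ Finset.range k, 2 ^ k * (b i * (1 + a i l ^ k)) := by
            apply Finset.sum_congr rfl; intro i _
            rw [Finset.mul_sum, Finset.mul_sum]
            apply Finset.sum_congr rfl; intro l _; ring
        _ = ∑ l ∈ Finset.range k, ∑ i, 2 ^ k * (b i * (1 + a i l ^ k)) := Finset.sum_comm
        _ = 2 ^ k * ∑ l ∈ Finset.range k, ∑ i, b i * (1 + a i l ^ k) := by
            rw [Finset.mul_sum]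
            apply Finset.sum_congr rfl; intro l _
            rw [Finset.mul_sum]
  -- key2 : every element of T₂ is dominated by an element of T₁
  have key2 : ∀ s ∈ T₂, ∃ s' ∈ T₁, s ≤ s' := by
    rintro s ⟨w, hw, hcon, rfl⟩
    have hpow : ∀ i, (w i ^ (1 / (k:ℝ))) ^ k = w i := by
      intro i
      rw [← Real.rpow_natCast (w i ^ (1 / (k:ℝ))) k, ← Real.rpow_mul (hw i)]
      rw [one_div_mul_cancel (by exact_mod_cast hk.ne' : (k:ℝ) ≠ 0), Real.rpow_one]
    refine ⟨∑ i, b i * ∏ l ∈ Finset.range k, (1 + w i ^ (1 / (k:ℝ))), ?_, ?_⟩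
    · refine ⟨fun i _ => w i ^ (1 / (k:ℝ)), fun i l => Real.rpow_nonneg (hw i) _, ?_, rfl⟩
      intro l _
      simpa only [hpow] using hcon
    · apply Finset.sum_le_sum
      intro i _
      apply mul_le_mul_of_nonneg_left _ (hb i)
      have hc0 : 0 ≤ w i ^ (1 / (k:ℝ)) := Real.rpow_nonneg (hw i) _
      calc 1 + w i = 1 + (w i ^ (1 / (k:ℝ))) ^ k := by rw [hpow]
        _ ≤ (1 + w i ^ (1 / (k:ℝ))) ^ k := aux1 k hk _ hc0
        _ = ∏ l ∈ Finset.range k, (1 + w i ^ (1 / (k:ℝ))) := by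
            rw [Finset.prod_const, Finset.card_range]
  by_cases hne2 : T₂.Nonempty
  · by_cases hbdd2 : BddAbove T₂
    · obtain ⟨s₀, hs₀⟩ := id hne2
      obtain ⟨s₀', hs₀', _⟩ := key2 s₀ hs₀
      have hne1 : T₁.Nonempty := ⟨s₀', hs₀'⟩
      have hS₂nn : 0 ≤ sSup T₂ := le_trans (nn2 s₀ hs₀) (le_csSup hbdd2 hs₀)
      have hub : ∀ s ∈ T₁, s ≤ (k : ℝ) * 2 ^ k * sSup T₂ := by
        intro s hs
        obtain ⟨g, hg, hsle⟩ := key1 s hs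
        have : ∑ l ∈ Finset.range k, g l ≤ ∑ l ∈ Finset.range k, sSup T₂ := by
          apply Finset.sum_le_sum
          intro l hl
          exact le_csSup hbdd2 (hg l (Finset.mem_range.mp hl))
        rw [Finset.sum_const, Finset.card_range, nsmul_eq_mul] at this
        have h2k : (0:ℝ) ≤ 2 ^ k := by positivity
        calc s ≤ 2 ^ k * ∑ l ∈ Finset.range k, g l := hsle
          _ ≤ 2 ^ k * ((k:ℝ) * sSup T₂) := mul_le_mul_of_nonneg_left this h2k
          _ = (k : ℝ) * 2 ^ k * sSup T₂ := by ring
      have hbdd1 : BddAbove T₁ := ⟨_, hub⟩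
      constructor
      · have h1 : sSup T₂ ≤ sSup T₁ := by
          apply csSup_le hne2
          intro s hs
          obtain ⟨s', hs', hle⟩ := key2 s hs
          exact hle.trans (le_csSup hbdd1 hs')
        have h2 : 1 / ((k : ℝ) * 2 ^ k) ≤ 1 := by
          rw [div_le_one hCpos]; exact hCone
        calc 1 / ((k : ℝ) * 2 ^ k) * sSup T₂ ≤ 1 * sSup T₂ :=
              mul_le_mul_of_nonneg_right h2 hS₂nn
          _ = sSup T₂ := one_mul _
          _ ≤ sSup T₁ := h1
      · exact csSup_le hne1 hub
    · have hbdd1 : ¬ BddAbove T₁ := by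
        intro h
        apply hbdd2
        refine ⟨sSup T₁, ?_⟩
        intro s hs
        obtain ⟨s', hs', hle⟩ := key2 s hs
        exact hle.trans (le_csSup h hs')
      rw [Real.sSup_of_not_bddAbove hbdd2, Real.sSup_of_not_bddAbove hbdd1]
      simp
  · have hne1 : ¬ T₁.Nonempty := by
      rintro ⟨s, hs⟩
      obtain ⟨g, hg, _⟩ := key1 s hs
      exact hne2 ⟨g 0, hg 0 hk⟩
    rw [Set.not_nonempty_iff_eq_empty] at hne2 hne1
    rw [hne2, hne1, Real.sSup_empty]
    norm_num
end

section
/- Let k, d be positive integers, C > 0, and for each r ≤ d let N_1^{(r)}, …, N_n^{(r)} : [0,∞) → [0,∞] be nondecreasing functions satisfying N_i^{(r)}(C t x) ≥ t^{1/k} N_i^{(r)}(x) for all t, x ≥ 1. Then there is a constant C'(k,d) depending only on k, d, C such that for every array of nonnegative coefficients (a_{i_1,…,i_d}) and every p ≥ 1: (1/C') ⦀a⦀_p ≤ ⫴a⫴_{k,p} ≤ C' ⦀a⦀_p, where ⫴a⫴_{k,p} = sup{ ∑_{i_1,…,i_d} a_{i_1,…,i_d} ∏_{r=1}^d ∏_{l=1}^k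 (1 + v_{i_r,l}^{(r)}) : for each r and each l ≤ k, ∑_{i=1}^n N_i^{(r)}((v_{i,l}^{(r)})^k) ≤ p } and ⦀a⦀_p = sup{ ∑_{i_1,…,i_d} a_{i_1,…,i_d} ∏_{r=1}^d (1 + v_{i_r}^{(r)}) : for each r, ∑_{i=1}^n N_i^{(r)}(v_i^{(r)}) ≤ p }. -/
open scoped ENNReal

lemma aux_one_add_pow {u : ℝ} (hu : 0 ≤ u) : ∀ k : ℕ, 0 < k → 1 + u ^ k ≤ (1 + u) ^ k := by
  intro k
  induction k with
  | zero => intro h; omega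
  | succ n ih =>
    intro _
    rcases Nat.eq_zero_or_pos n with hn | hn
    · subst hn; simp
    · have h1 := ih hn
      have h2 : 0 ≤ u ^ n := pow_nonneg hu n
      calc 1 + u ^ (n+1) ≤ (1 + u ^ n) * (1 + u) := by rw [pow_succ]; nlinarith
        _ ≤ (1 + u) ^ n * (1 + u) := by
            apply mul_le_mul_of_nonneg_right h1 (by linarith)
        _ = (1 + u) ^ (n+1) := by ring

lemma aux_sSup_le {A B : Set ℝ} {K : ℝ} (hK : 0 < K)
    (hB0 : ∀ y ∈ B, 0 ≤ y)
    (hAB : ∀ x ∈ A, ∃ y ∈ B, x ≤ K * y)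
    (hBA : ∀ y ∈ B, ∃ x ∈ A, y ≤ K * x) :
    sSup A ≤ K * sSup B := by
  by_cases hB : BddAbove B
  · have hsB : 0 ≤ sSup B := Real.sSup_nonneg hB0
    apply Real.sSup_le _ (by positivity)
    intro x hx
    obtain ⟨y, hy, hxy⟩ := hAB x hx
    exact hxy.trans (mul_le_mul_of_nonneg_left (le_csSup hB hy) hK.le)
  · have hA : ¬ BddAbove A := by
      intro ⟨c, hc⟩
      apply hB
      refine ⟨K * c, fun y hy => ?_⟩
      obtain ⟨x, hx, hyx⟩ := hBA y hy
      exact hyx.trans (mul_le_mul_of_nonneg_left (hc hx) hK.le)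
    rw [Real.sSup_of_not_bddAbove hA, Real.sSup_of_not_bddAbove hB, mul_zero]

/-- Equivalence (4.2): the `d`-fold supremum over `k`-fold products is comparable to the
norm `⦀a⦀_p`. -/
theorem stmt_17 (k d : ℕ) (hk : 0 < k) (hd : 0 < d) (C : ℝ) (hC : 0 < C) :
    ∃ C' : ℝ, 0 < C' ∧
      ∀ (n : ℕ) (N : Fin d → Fin n → ℝ → ℝ≥0∞),
        (∀ r i, MonotoneOn (N r i) (Set.Ici 0)) →
        (∀ r i, ∀ t : ℝ, 1 ≤ t → ∀ x : ℝ, 1 ≤ x →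
          ENNReal.ofReal (t ^ (1 / (k : ℝ))) * N r i x ≤ N r i (C * t * x)) →
        ∀ (a : (Fin d → Fin n) → ℝ), (∀ i, 0 ≤ a i) →
        ∀ p : ℝ, 1 ≤ p →
          (1 / C') * sSup {s : ℝ | ∃ v : Fin d → Fin n → ℝ, (∀ r i, 0 ≤ v r i) ∧
                (∀ r, (∑ i, N r i (v r i)) ≤ ENNReal.ofReal p) ∧
                s = ∑ i : Fin d → Fin n, a i * ∏ r, (1 + v r (i r))}
              ≤ sSup {s : ℝ | ∃ v : Fin d → Fin n → ℕ → ℝ, (∀ r i l, 0 ≤ v r i l) ∧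
                (∀ r, ∀ l < k, (∑ i, N r i ((v r i l) ^ k)) ≤ ENNReal.ofReal p) ∧
                s = ∑ i : Fin d → Fin n, a i * ∏ r, ∏ l ∈ Finset.range k, (1 + v r (i r) l)} ∧
            sSup {s : ℝ | ∃ v : Fin d → Fin n → ℕ → ℝ, (∀ r i l, 0 ≤ v r i l) ∧
                (∀ r, ∀ l < k, (∑ i, N r i ((v r i l) ^ k)) ≤ ENNReal.ofReal p) ∧
                s = ∑ i : Fin d → Fin n, a i * ∏ r, ∏ l ∈ Finset.range k, (1 + v r (i r) l)}
              ≤ C' * sSup {s : ℝ | ∃ v : Fin d → Fin n → ℝ, (∀ r i, 0 ≤ v r i) ∧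
                (∀ r, (∑ i, N r i (v r i)) ≤ ENNReal.ofReal p) ∧
                s = ∑ i : Fin d → Fin n, a i * ∏ r, (1 + v r (i r))} := by
  classical
  have hk1 : (1:ℝ) ≤ (k:ℝ) := by exact_mod_cast hk
  have hkne : (k:ℝ) ≠ 0 := by positivity
  set T : ℝ := C * (2*(k:ℝ))^k with hT
  have hT0 : 0 < T := by positivity
  set K0 : ℝ := ((2:ℝ)^k * (1 + T))^d with hK0def
  have hK01 : 1 ≤ K0 := one_le_pow₀ (by nlinarith [one_le_pow₀ (by norm_num : (1:ℝ) ≤ 2) (n := k)])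
  have hCP : (0:ℝ) < max 1 K0 := lt_of_lt_of_le one_pos (le_max_left _ _)
  refine ⟨max 1 K0, hCP, ?_⟩
  intro n N hmono hgrow a ha p hp
  set SA : Set ℝ := {s : ℝ | ∃ v : Fin d → Fin n → ℝ, (∀ r i, 0 ≤ v r i) ∧
      (∀ r, (∑ i, N r i (v r i)) ≤ ENNReal.ofReal p) ∧
      s = ∑ i : Fin d → Fin n, a i * ∏ r, (1 + v r (i r))} with hSA
  set SB : Set ℝ := {s : ℝ | ∃ v : Fin d → Fin n → ℕ → ℝ, (∀ r i l, 0 ≤ v r i l) ∧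
      (∀ r, ∀ l < k, (∑ i, N r i ((v r i l) ^ k)) ≤ ENNReal.ofReal p) ∧
      s = ∑ i : Fin d → Fin n, a i * ∏ r, ∏ l ∈ Finset.range k, (1 + v r (i r) l)} with hSB
  have hA0 : ∀ x ∈ SA, 0 ≤ x := by
    rintro x ⟨v, hv0, -, rfl⟩
    refine Finset.sum_nonneg fun i _ => mul_nonneg (ha i) (Finset.prod_nonneg fun r _ => ?_)
    have := hv0 r (i r); linarith
  have hB0 : ∀ y ∈ SB, 0 ≤ y := by
    rintro y ⟨w, hw0, -, rfl⟩
    refine Finset.sum_nonneg fun i _ => mul_nonneg (ha i) (Finset.prod_nonneg fun r _ =>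
      Finset.prod_nonneg fun l _ => ?_)
    have := hw0 r (i r) l; linarith
  -- forward map: single → multi
  have hAB : ∀ x ∈ SA, ∃ y ∈ SB, x ≤ max 1 K0 * y := by
    rintro x ⟨v, hv0, hvc, rfl⟩
    set w : Fin d → Fin n → ℕ → ℝ := fun r i _ => (v r i) ^ ((k:ℝ)⁻¹) with hw
    have hkey : ∀ r i l, (w r i l) ^ k = v r i := by
      intro r i l
      show ((v r i) ^ ((k:ℝ)⁻¹)) ^ k = v r i
      rw [← Real.rpow_natCast ((v r i) ^ ((k:ℝ)⁻¹)) k, ← Real.rpow_mul (hv0 r i),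
        inv_mul_cancel₀ hkne, Real.rpow_one]
    have hw0 : ∀ r i l, 0 ≤ w r i l := fun r i l => Real.rpow_nonneg (hv0 r i) _
    refine ⟨_, ⟨w, hw0, ?_, rfl⟩, ?_⟩
    · intro r l hl
      have h' : ∀ i, N r i (w r i l ^ k) = N r i (v r i) := fun i => by rw [hkey r i l]
      simp only [h']
      exact hvc r
    · have hxy : (∑ i : Fin d → Fin n, a i * ∏ r, (1 + v r (i r)))
          ≤ ∑ i : Fin d → Fin n, a i * ∏ r, ∏ l ∈ Finset.range k, (1 + w r (i r) l) := by
        refine Finset.sum_le_sum fun i _ => mul_le_mul_of_nonneg_left ?_ (ha i)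
        refine Finset.prod_le_prod (fun r _ => by have := hv0 r (i r); linarith) fun r _ => ?_
        have hc : ∏ l ∈ Finset.range k, (1 + w r (i r) l) = (1 + w r (i r) 0) ^ k := by
          calc ∏ l ∈ Finset.range k, (1 + w r (i r) l)
              = ∏ _l ∈ Finset.range k, (1 + w r (i r) 0) := rfl
            _ = (1 + w r (i r) 0) ^ k := by rw [Finset.prod_const, Finset.card_range]
        rw [hc]
        have h2 := aux_one_add_pow (hw0 r (i r) 0) k hk
        rw [hkey r (i r) 0] at h2
        exact h2
      have hy0 : 0 ≤ ∑ i : Fin d → Fin n, a i * ∏ r, ∏ l ∈ Finset.range k, (1 + w r (i r) l) :=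
        le_trans (hA0 _ ⟨v, hv0, hvc, rfl⟩) hxy
      calc (∑ i : Fin d → Fin n, a i * ∏ r, (1 + v r (i r)))
          ≤ ∑ i : Fin d → Fin n, a i * ∏ r, ∏ l ∈ Finset.range k, (1 + w r (i r) l) := hxy
        _ ≤ max 1 K0 * _ := le_mul_of_one_le_left hy0 (le_max_left _ _)
  -- backward map: multi → single
  have hBA : ∀ y ∈ SB, ∃ x ∈ SA, y ≤ max 1 K0 * x := by
    rintro y ⟨w, hw0, hwc, rfl⟩
    have hne : (Finset.range k).Nonempty := Finset.nonempty_range_iff.2 hk.ne'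
    set m : Fin d → Fin n → ℝ := fun r i => (Finset.range k).sup' hne (w r i) with hm
    have hwm : ∀ r i, ∀ l ∈ Finset.range k, w r i l ≤ m r i := fun r i l hl =>
      Finset.le_sup' (w r i) hl
    have hm0 : ∀ r i, 0 ≤ m r i := fun r i =>
      le_trans (hw0 r i 0) (hwm r i 0 (Finset.mem_range.2 hk))
    set M : Fin d → Fin n → ℝ := fun r i => (m r i) ^ k with hM
    have hM0 : ∀ r i, 0 ≤ M r i := fun r i => pow_nonneg (hm0 r i) k
    set v : Fin d → Fin n → ℝ := fun r i => if T ≤ M r i then M r i / T else 0 with hv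
    have hv0 : ∀ r i, 0 ≤ v r i := by
      intro r i
      show (0:ℝ) ≤ if T ≤ M r i then M r i / T else 0
      split_ifs with h
      · exact div_nonneg (hT0.le.trans h) hT0.le
      · exact le_rfl
    have hvc : ∀ r, (∑ i, N r i (v r i)) ≤ ENNReal.ofReal p := by
      intro r
      set c : ℝ≥0∞ := 2 * (k : ℝ≥0∞) with hc
      have hc0 : c ≠ 0 := by
        simp [hc, hk.ne']
      have hcT : c ≠ ⊤ := by
        rw [hc]
        exact ENNReal.mul_ne_top (by simp) (ENNReal.natCast_ne_top k)
      have hofc : ENNReal.ofReal (2*(k:ℝ)) = c := by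
        rw [show (2*(k:ℝ)) = ((2*k : ℕ) : ℝ) by push_cast; ring, ENNReal.ofReal_natCast]
        rw [hc]; push_cast; ring
      have step0 : ∀ i l, N r i 0 ≤ N r i ((w r i l)^k) := fun i l =>
        hmono r i (Set.mem_Ici.2 le_rfl) (Set.mem_Ici.2 (pow_nonneg (hw0 r i l) k))
          (pow_nonneg (hw0 r i l) k)
      have stepA : ∀ i, c * N r i (v r i)
          ≤ ∑ l ∈ Finset.range k, (N r i 0 + N r i ((w r i l)^k)) := by
        intro i
        by_cases hbig : T ≤ M r i
        · have hvi : v r i = M r i / T := if_pos hbig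
          have hx : (1:ℝ) ≤ v r i := by rw [hvi, le_div_iff₀ hT0]; linarith
          have ht1 : (1:ℝ) ≤ (2*(k:ℝ))^k := one_le_pow₀ (by linarith)
          have hg := hgrow r i ((2*(k:ℝ))^k) ht1 (v r i) hx
          have hexp : ((2*(k:ℝ))^k : ℝ) ^ (1/(k:ℝ)) = 2*(k:ℝ) := by
            rw [← Real.rpow_natCast (2*(k:ℝ)) k, ← Real.rpow_mul (by positivity),
              mul_one_div, div_self hkne, Real.rpow_one]
          have harg : C * (2*(k:ℝ))^k * v r i = M r i := by
            rw [hvi, ← hT]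
            exact mul_div_cancel₀ _ hT0.ne'
          rw [hexp, hofc, harg] at hg
          obtain ⟨l0, hl0, hml0⟩ := Finset.exists_mem_eq_sup' hne (w r i)
          have hmw : m r i = w r i l0 := hml0
          have hMeq : M r i = (w r i l0)^k := by
            show (m r i)^k = (w r i l0)^k
            rw [hmw]
          calc c * N r i (v r i) ≤ N r i (M r i) := hg
            _ = N r i ((w r i l0)^k) := by rw [hMeq]
            _ ≤ N r i 0 + N r i ((w r i l0)^k) := le_add_self
            _ ≤ ∑ l ∈ Finset.range k, (N r i 0 + N r i ((w r i l)^k)) :=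
                Finset.single_le_sum (f := fun l => N r i 0 + N r i ((w r i l)^k))
                  (fun l _ => zero_le) hl0
        · have hvi : v r i = 0 := if_neg hbig
          rw [hvi]
          have hsum : c * N r i 0 = ∑ _l ∈ Finset.range k, (N r i 0 + N r i 0) := by
            rw [Finset.sum_const, Finset.card_range, nsmul_eq_mul, hc]; ring
          rw [hsum]
          exact Finset.sum_le_sum fun l _ => add_le_add_right (step0 i l) _
      have stepB : ∑ i, ∑ l ∈ Finset.range k, (N r i 0 + N r i ((w r i l)^k))
          ≤ c * ENNReal.ofReal p := by
        rw [Finset.sum_comm]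
        calc ∑ l ∈ Finset.range k, ∑ i, (N r i 0 + N r i ((w r i l)^k))
            ≤ ∑ _l ∈ Finset.range k, (2 * ENNReal.ofReal p) := by
              refine Finset.sum_le_sum fun l hl => ?_
              rw [Finset.sum_add_distrib, two_mul]
              exact add_le_add
                (le_trans (Finset.sum_le_sum fun i _ => step0 i 0) (hwc r 0 hk))
                (hwc r l (Finset.mem_range.1 hl))
          _ = c * ENNReal.ofReal p := by
              rw [Finset.sum_const, Finset.card_range, nsmul_eq_mul, hc]; ring
      have hfin : c * ∑ i, N r i (v r i) ≤ c * ENNReal.ofReal p := by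
        rw [Finset.mul_sum]
        exact le_trans (Finset.sum_le_sum fun i _ => stepA i) stepB
      exact (ENNReal.mul_le_mul_iff_right hc0 hcT).1 hfin
    refine ⟨_, ⟨v, hv0, hvc, rfl⟩, ?_⟩
    have hpoint : ∀ (j : Fin d → Fin n) (r : Fin d),
        ∏ l ∈ Finset.range k, (1 + w r (j r) l) ≤ ((2:ℝ)^k * (1+T)) * (1 + v r (j r)) := by
      intro j r
      have h1 : ∏ l ∈ Finset.range k, (1 + w r (j r) l) ≤ (1 + m r (j r))^k := by
        calc ∏ l ∈ Finset.range k, (1 + w r (j r) l)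
            ≤ ∏ _l ∈ Finset.range k, (1 + m r (j r)) :=
              Finset.prod_le_prod (fun l _ => by have := hw0 r (j r) l; linarith)
                (fun l hl => add_le_add_right (hwm r (j r) l hl) 1)
          _ = (1 + m r (j r))^k := by rw [Finset.prod_const, Finset.card_range]
      have hmm := hm0 r (j r)
      have h2 : (1 + m r (j r))^k ≤ 2^k * (1 + M r (j r)) := by
        have hle : 1 + m r (j r) ≤ 2 * max 1 (m r (j r)) := by
          rcases le_total (m r (j r)) 1 with h | h
          · have := le_max_left (1:ℝ) (m r (j r)); linarith
          · have := le_max_right (1:ℝ) (m r (j r)); linarith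
        have hmax : (max 1 (m r (j r)))^k ≤ 1 + M r (j r) := by
          rcases le_total (m r (j r)) 1 with h | h
          · rw [max_eq_left h, one_pow]; have := hM0 r (j r); linarith
          · rw [max_eq_right h]
            have hMe : M r (j r) = (m r (j r))^k := rfl
            linarith [hMe]
        calc (1 + m r (j r))^k ≤ (2 * max 1 (m r (j r)))^k := pow_le_pow_left₀ (by linarith) hle k
          _ = 2^k * (max 1 (m r (j r)))^k := mul_pow 2 _ k
          _ ≤ 2^k * (1 + M r (j r)) := mul_le_mul_of_nonneg_left hmax (by positivity)
      have h3 : 1 + M r (j r) ≤ (1+T) * (1 + v r (j r)) := by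
        have hv' := hv0 r (j r)
        by_cases hbig : T ≤ M r (j r)
        · have hvi : v r (j r) = M r (j r) / T := if_pos hbig
          have hM' : M r (j r) = T * v r (j r) := by
            rw [hvi]; field_simp
          nlinarith [hT0]
        · have hvi : v r (j r) = 0 := if_neg hbig
          push_neg at hbig
          rw [hvi]
          nlinarith [hT0, hM0 r (j r)]
      have hprod0 : (0:ℝ) ≤ ∏ l ∈ Finset.range k, (1 + w r (j r) l) :=
        Finset.prod_nonneg fun l _ => by have := hw0 r (j r) l; linarith
      calc ∏ l ∈ Finset.range k, (1 + w r (j r) l) ≤ (1 + m r (j r))^k := h1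
        _ ≤ 2^k * (1 + M r (j r)) := h2
        _ ≤ 2^k * ((1+T) * (1 + v r (j r))) := mul_le_mul_of_nonneg_left h3 (by positivity)
        _ = ((2:ℝ)^k * (1+T)) * (1 + v r (j r)) := by ring
    have hyx : (∑ i : Fin d → Fin n, a i * ∏ r, ∏ l ∈ Finset.range k, (1 + w r (i r) l))
        ≤ K0 * ∑ i : Fin d → Fin n, a i * ∏ r, (1 + v r (i r)) := by
      rw [Finset.mul_sum]
      refine Finset.sum_le_sum fun i _ => ?_
      have hq : ∏ r, ∏ l ∈ Finset.range k, (1 + w r (i r) l) ≤ K0 * ∏ r, (1 + v r (i r)) := by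
        calc ∏ r, ∏ l ∈ Finset.range k, (1 + w r (i r) l)
            ≤ ∏ r, (((2:ℝ)^k * (1+T)) * (1 + v r (i r))) :=
              Finset.prod_le_prod
                (fun r _ => Finset.prod_nonneg fun l _ => by have := hw0 r (i r) l; linarith)
                (fun r _ => hpoint i r)
          _ = ((2:ℝ)^k * (1+T))^(Finset.univ : Finset (Fin d)).card * ∏ r, (1 + v r (i r)) := by
              rw [Finset.prod_mul_distrib, Finset.prod_const]
          _ = K0 * ∏ r, (1 + v r (i r)) := by
              rw [Finset.card_univ, Fintype.card_fin]
      calc a i * ∏ r, ∏ l ∈ Finset.range k, (1 + w r (i r) l)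
          ≤ a i * (K0 * ∏ r, (1 + v r (i r))) := mul_le_mul_of_nonneg_left hq (ha i)
        _ = K0 * (a i * ∏ r, (1 + v r (i r))) := by ring
    have hx0 : 0 ≤ ∑ i : Fin d → Fin n, a i * ∏ r, (1 + v r (i r)) :=
      hA0 _ ⟨v, hv0, hvc, rfl⟩
    calc (∑ i : Fin d → Fin n, a i * ∏ r, ∏ l ∈ Finset.range k, (1 + w r (i r) l))
        ≤ K0 * ∑ i : Fin d → Fin n, a i * ∏ r, (1 + v r (i r)) := hyx
      _ ≤ max 1 K0 * ∑ i : Fin d → Fin n, a i * ∏ r, (1 + v r (i r)) :=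
          mul_le_mul_of_nonneg_right (le_max_right _ _) hx0
  have hle1 : sSup SA ≤ (max 1 K0) * sSup SB := aux_sSup_le hCP hB0 hAB hBA
  have hle2 : sSup SB ≤ (max 1 K0) * sSup SA := aux_sSup_le hCP hA0 hBA hAB
  constructor
  · calc 1 / (max 1 K0) * sSup SA ≤ 1/(max 1 K0) * ((max 1 K0) * sSup SB) :=
        mul_le_mul_of_nonneg_left hle1 (by positivity)
      _ = sSup SB := by field_simp
  · exact hle2
end
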